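/- arXiv:math/0012019 — 4 statements merged into one kernel-verified Lean document; each statement's English description precedes it below -/
import Mathlib

section
/- If g : X → Y is a morphism term of 𝒟 and X ∈ {A, C}, then Y ∈ {A, C} and g is identical, up to associativity of composition, to a composite consisting of zero or more occurrences of 1_C, followed by at most one occurrence of f, followed by zero or more occurrences of 1_A. In particular, if X = C then Y = C and g = 1_C in 𝒟. -/
open CategoryTheory

universe u v

namespace GDin

/-! ### Graphs in the sense of the paper -/

/-- Vertices of a graph with `m` left-hand argument places, `n` right-hand argument
places and `g` auxiliary `G`-vertices. -/
abbrev Vtx (m n g : ℕ) := (Fin m ⊕ Fin n) ⊕ Fin g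

/-- The "same component" relation generated by a set of edges. -/
def Conn {V : Type*} (E : V → V → Prop) : V → V → Prop := Relation.EqvGen E

/-- A graph in the sense of the paper.  The sign (variance) functions `sL` (for the
left-hand argument places `x₁,…,x_m`) and `sR` (for the right-hand argument places
`y₁,…,y_n`) are parameters; `true` means positive (covariant), `false` negative.
The structure also carries the number `k` of connected components together with the
component classifier `π`. -/
structure GGraph (m n g : ℕ) (sL : Fin m → Bool) (sR : Fin n → Bool) : Type where
  edge : Vtx m n g → Vtx m n g → Prop
  symm : ∀ u v, edge u v → edge v u
  /-- condition 1: every vertex belongs to some edge -/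
  covered : ∀ v, ∃ w, edge v w
  /-- condition 2: an edge joins two left-hand argument places iff they have opposite
  signs and lie in the same component -/
  condX : ∀ i j : Fin m, edge (.inl (.inl i)) (.inl (.inl j)) ↔
    (sL i = !sL j ∧ Conn edge (.inl (.inl i)) (.inl (.inl j)))
  /-- condition 3 -/
  condY : ∀ i j : Fin n, edge (.inl (.inr i)) (.inl (.inr j)) ↔
    (sR i = !sR j ∧ Conn edge (.inl (.inr i)) (.inl (.inr j)))
  /-- condition 4 -/
  condXY : ∀ (i : Fin m) (j : Fin n), edge (.inl (.inl i)) (.inl (.inr j)) ↔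
    (sL i = sR j ∧ Conn edge (.inl (.inl i)) (.inl (.inr j)))
  /-- condition 5, first half: if a component contains an edge between two argument
  places then it contains no `G`-vertex -/
  condG₁ : ∀ v : Vtx m n g,
    (∃ u w : Fin m ⊕ Fin n, Conn edge (.inl u) v ∧ edge (.inl u) (.inl w)) →
      ∀ a : Fin g, ¬ Conn edge (.inr a) v
  /-- condition 5, second half: otherwise the component contains exactly one
  `G`-vertex -/
  condG₂ : ∀ v : Vtx m n g,
    (¬ ∃ u w : Fin m ⊕ Fin n, Conn edge (.inl u) v ∧ edge (.inl u) (.inl w)) →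
      ∃! a : Fin g, Conn edge (.inr a) v
  /-- condition 5: every other vertex of such a component is joined to the
  `G`-vertex by an edge -/
  condG₃ : ∀ (a : Fin g) (u : Fin m ⊕ Fin n),
    Conn edge (.inl u) (.inr a) → edge (.inl u) (.inr a)
  /-- the number of components -/
  k : ℕ
  /-- the component classifier -/
  π : Vtx m n g → Fin k
  π_surj : Function.Surjective π
  π_eq : ∀ u v, π u = π v ↔ Conn edge u v

namespace GGraph

variable {m n g : ℕ} {sL : Fin m → Bool} {sR : Fin n → Bool}

/-- component of the `i`-th left-hand argument place -/
def πL (Γ : GGraph m n g sL sR) (i : Fin m) : Fin Γ.k := Γ.π (.inl (.inl i))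

/-- component of the `j`-th right-hand argument place -/
def πR (Γ : GGraph m n g sL sR) (j : Fin n) : Fin Γ.k := Γ.π (.inl (.inr j))

end GGraph

/-! ### Variance-indexed categories and g-dinaturality -/

/-- `B` or `Bᵒᵖ` according to a variance. -/
def VarCat (B : Type u) [Category.{v} B] : Bool → Type u
  | true => B
  | false => Bᵒᵖ

instance (B : Type u) [Category.{v} B] : ∀ b, Category.{v} (VarCat B b)
  | true => (inferInstance : Category B)
  | false => (inferInstance : Category Bᵒᵖ)

variable {B : Type u} [Category.{v} B]

/-- The object of `B` or `Bᵒᵖ` with `P` at a positive argument place and `N` at a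
negative one. -/
def pairObj : (b : Bool) → B → B → VarCat B b
  | true, P, _ => P
  | false, _, N => Opposite.op N

/-- The morphism with `u` at a positive argument place and `v` (contravariantly) at a
negative one. -/
def pairHom : (b : Bool) → {P P' N N' : B} → (P ⟶ P') → (N' ⟶ N) →
    (pairObj b P N ⟶ pairObj b P' N')
  | true, _, _, _, _, u, _ => u
  | false, _, _, _, _, _, v => v.op

variable {ι : Type} {k : ℕ}

/-- The tuple of objects `⟨u,v⟩` with `u` in all positive and `v` in all negative
argument places. -/
@[reducible] def tupObj (s : ι → Bool) (P N : B) : ∀ i, VarCat B (s i) :=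
  fun i => pairObj (s i) P N

/-- The corresponding tuple of morphisms. -/
def tupHom (s : ι → Bool) {P P' N N' : B} (u : P ⟶ P') (v : N' ⟶ N) :
    (tupObj s P N ⟶ tupObj s P' N') :=
  fun i => pairHom (s i) u v

/-- The diagonal-like tuple of objects determined by an assignment of objects to
the components of a graph. -/
@[reducible] def diagObj (s : ι → Bool) (pl : ι → Fin k) (A : Fin k → B) :
    ∀ i, VarCat B (s i) :=
  fun i => pairObj (s i) (A (pl i)) (A (pl i))

/-- The tuple of objects obtained from the component assignment `A` by replacing the
value of component `c` by `P` at positive and `N` at negative argument places. -/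
def hexObj (s : ι → Bool) (pl : ι → Fin k) (c : Fin k) (A : Fin k → B) (P N : B) :
    ∀ i, VarCat B (s i) :=
  fun i => if pl i = c then pairObj (s i) P N else pairObj (s i) (A (pl i)) (A (pl i))

/-- The corresponding tuple of morphisms (identities outside component `c`). -/
def hexHom (s : ι → Bool) (pl : ι → Fin k) (c : Fin k) (A : Fin k → B)
    {P P' N N' : B} (u : P ⟶ P') (v : N' ⟶ N) :
    (hexObj s pl c A P N ⟶ hexObj s pl c A P' N') :=
  fun i => by
    unfold hexObj
    by_cases h : pl i = c
    · simp only [if_pos h]; exact pairHom (s i) u v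
    · simp only [if_neg h]; exact 𝟙 _

/-- update of a component assignment -/
def updF {γ : Type*} (A : Fin k → γ) (c : Fin k) (X : γ) : Fin k → γ :=
  fun j => if j = c then X else A j

theorem diag_upd (s : ι → Bool) (pl : ι → Fin k) (c : Fin k) (A : Fin k → B) (X : B) :
    diagObj s pl (updF A c X) = hexObj s pl c A X X := by
  funext i
  unfold diagObj hexObj updF
  by_cases h : pl i = c <;> simp [h]

/-- g-dinaturality of a transformation with respect to a graph: in every component
and for every morphism `f : P ⟶ Q` (all other components being kept fixed), the
g-dinaturality hexagon commutes. -/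
def IsGDin {m n gΓ : ℕ} {sL : Fin m → Bool} {sR : Fin n → Bool}
    (Γ : GGraph m n gΓ sL sR)
    (T : (∀ i : Fin m, VarCat B (sL i)) ⥤ B)
    (S : (∀ j : Fin n, VarCat B (sR j)) ⥤ B)
    (α : ∀ A : Fin Γ.k → B, T.obj (diagObj sL Γ.πL A) ⟶ S.obj (diagObj sR Γ.πR A)) :
    Prop :=
  ∀ (c : Fin Γ.k) (A : Fin Γ.k → B) (P Q : B) (f : P ⟶ Q),
    T.map (hexHom sL Γ.πL c A f (𝟙 Q)) ≫
      eqToHom (congrArg T.obj (diag_upd sL Γ.πL c A Q).symm) ≫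
      α (updF A c Q) ≫
      eqToHom (congrArg S.obj (diag_upd sR Γ.πR c A Q)) ≫
      S.map (hexHom sR Γ.πR c A (𝟙 Q) f)
    = T.map (hexHom sL Γ.πL c A (𝟙 P) f) ≫
      eqToHom (congrArg T.obj (diag_upd sL Γ.πL c A P).symm) ≫
      α (updF A c P) ≫
      eqToHom (congrArg S.obj (diag_upd sR Γ.πR c A P)) ≫
      S.map (hexHom sR Γ.πR c A f (𝟙 P))

/-- The g-dinaturality hexagon for a transformation whose graph has a single
component (so that only the signs of the argument places matter). -/
def SingleHex {ιx ιz : Type} (sx : ιx → Bool) (sz : ιz → Bool)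
    (F : (∀ i : ιx, VarCat B (sx i)) ⥤ B) (H : (∀ l : ιz, VarCat B (sz l)) ⥤ B)
    (φ : ∀ A : B, F.obj (tupObj sx A A) ⟶ H.obj (tupObj sz A A)) : Prop :=
  ∀ (P Q : B) (f : P ⟶ Q),
    F.map (tupHom sx f (𝟙 Q)) ≫ φ Q ≫ H.map (tupHom sz (𝟙 Q) f)
    = F.map (tupHom sx (𝟙 P) f) ≫ φ P ≫ H.map (tupHom sz f (𝟙 P))


/-! ### The free category `𝒟` of the equational class `𝒦_{Φ,Ψ}` -/

/-- Objects of `𝒟`: freely generated over `{A, C}` by an `m`-ary operation `T`,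
an `n`-ary operation `S` and a `p`-ary operation `R`. -/
inductive DObj (m n p : ℕ) : Type
  | A : DObj m n p
  | C : DObj m n p
  | T : (Fin m → DObj m n p) → DObj m n p
  | S : (Fin n → DObj m n p) → DObj m n p
  | R : (Fin p → DObj m n p) → DObj m n p

/-- source of a functor argument according to its variance -/
abbrev dSrc {γ : Type*} (b : Bool) (X Y : γ) : γ := cond b X Y
/-- target of a functor argument according to its variance -/
abbrev dTgt {γ : Type*} (b : Bool) (X Y : γ) : γ := cond b Y X

section DD

variable {m n p gΦ gΨ : ℕ} {sx : Fin m → Bool} {sy : Fin n → Bool} {sz : Fin p → Bool}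

/-- Morphism terms of the category `𝒟`, generated from `f : A → C`, the identities,
the generic g-dinatural transformations `α`, `β` and the operations `T`, `S`, `R`
(contravariant in their negative argument places). -/
inductive DTerm (Φ : GGraph m n gΦ sx sy) (Ψ : GGraph n p gΨ sy sz) :
    DObj m n p → DObj m n p → Type
  | f : DTerm Φ Ψ .A .C
  | id (X : DObj m n p) : DTerm Φ Ψ X X
  /-- composition, written in diagrammatic order -/
  | comp {X Y Z} : DTerm Φ Ψ X Y → DTerm Φ Ψ Y Z → DTerm Φ Ψ X Z
  | alpha (W : Fin Φ.k → DObj m n p) :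
      DTerm Φ Ψ (.T fun i => W (Φ.πL i)) (.S fun j => W (Φ.πR j))
  | beta (W : Fin Ψ.k → DObj m n p) :
      DTerm Φ Ψ (.S fun j => W (Ψ.πL j)) (.R fun l => W (Ψ.πR l))
  | mapT {X Y : Fin m → DObj m n p} :
      (∀ i, DTerm Φ Ψ (dSrc (sx i) (X i) (Y i)) (dTgt (sx i) (X i) (Y i))) →
      DTerm Φ Ψ (.T X) (.T Y)
  | mapS {X Y : Fin n → DObj m n p} :
      (∀ j, DTerm Φ Ψ (dSrc (sy j) (X j) (Y j)) (dTgt (sy j) (X j) (Y j))) →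
      DTerm Φ Ψ (.S X) (.S Y)
  | mapR {X Y : Fin p → DObj m n p} :
      (∀ l, DTerm Φ Ψ (dSrc (sz l) (X l) (Y l)) (dTgt (sz l) (X l) (Y l))) →
      DTerm Φ Ψ (.R X) (.R Y)

variable {Φ : GGraph m n gΦ sx sy} {Ψ : GGraph n p gΨ sy sz}

/-- composition of functor arguments, respecting variance -/
def dComp {X Y Z : DObj m n p} : (b : Bool) →
    DTerm Φ Ψ (dSrc b X Y) (dTgt b X Y) → DTerm Φ Ψ (dSrc b Y Z) (dTgt b Y Z) →
    DTerm Φ Ψ (dSrc b X Z) (dTgt b X Z)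
  | true, g, h => .comp g h
  | false, g, h => .comp h g

/-- identity as a functor argument -/
def dId (X : DObj m n p) : (b : Bool) → DTerm Φ Ψ (dSrc b X X) (dTgt b X X)
  | true => .id X
  | false => .id X

/-- the object tuple with `P` at the positive and `N` at the negative argument
places of component `i`, and the parameter `Z` elsewhere -/
def mixT {q k : ℕ} (pl : Fin q → Fin k) (s : Fin q → Bool) (i : Fin k)
    (Z : Fin k → DObj m n p) (P N : DObj m n p) : Fin q → DObj m n p :=
  fun j => if pl j = i then (cond (s j) P N) else Z (pl j)

section vecs
variable {q k : ℕ} (pl : Fin q → Fin k) (s : Fin q → Bool) (i : Fin k)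
  (Z : Fin k → DObj m n p) {X Y : DObj m n p} (t : DTerm Φ Ψ X Y)

/-- the argument vector `g` of the equation (α) (left-hand side, source functor):
`t` at the positive and `1_Y` at the negative argument places of component `i`,
identities elsewhere -/
def vecA : ∀ j, DTerm Φ Ψ (dSrc (s j) (mixT pl s i Z X Y j) (updF Z i Y (pl j)))
    (dTgt (s j) (mixT pl s i Z X Y j) (updF Z i Y (pl j))) := fun j => by
  unfold mixT updF
  by_cases h : pl j = i
  · simp only [if_pos h]
    cases hs : s j
    · exact .id Y
    · exact t
  · simp only [if_neg h]
    exact dId (Z (pl j)) (s j)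

/-- the argument vector `h` of the equation (α) (left-hand side, target functor) -/
def vecB : ∀ j, DTerm Φ Ψ (dSrc (s j) (updF Z i Y (pl j)) (mixT pl s i Z Y X j))
    (dTgt (s j) (updF Z i Y (pl j)) (mixT pl s i Z Y X j)) := fun j => by
  unfold mixT updF
  by_cases h : pl j = i
  · simp only [if_pos h]
    cases hs : s j
    · exact t
    · exact .id Y
  · simp only [if_neg h]
    exact dId (Z (pl j)) (s j)

/-- the argument vector `g'` of the equation (α) (right-hand side, source functor) -/
def vecC : ∀ j, DTerm Φ Ψ (dSrc (s j) (mixT pl s i Z X Y j) (updF Z i X (pl j)))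
    (dTgt (s j) (mixT pl s i Z X Y j) (updF Z i X (pl j))) := fun j => by
  unfold mixT updF
  by_cases h : pl j = i
  · simp only [if_pos h]
    cases hs : s j
    · exact t
    · exact .id X
  · simp only [if_neg h]
    exact dId (Z (pl j)) (s j)

/-- the argument vector `h'` of the equation (α) (right-hand side, target functor) -/
def vecD : ∀ j, DTerm Φ Ψ (dSrc (s j) (updF Z i X (pl j)) (mixT pl s i Z Y X j))
    (dTgt (s j) (updF Z i X (pl j)) (mixT pl s i Z Y X j)) := fun j => by
  unfold mixT updF
  by_cases h : pl j = i
  · simp only [if_pos h]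
    cases hs : s j
    · exact .id X
    · exact t
  · simp only [if_neg h]
    exact dId (Z (pl j)) (s j)

end vecs

/-- Equality of morphism terms of `𝒟`: the congruence generated by the
`𝒦_{Φ,Ψ}`-equations (categorial, functorial and g-dinatural equations). -/
inductive DEq : ∀ {X Y : DObj m n p}, DTerm Φ Ψ X Y → DTerm Φ Ψ X Y → Prop
  | refl {X Y} (g : DTerm Φ Ψ X Y) : DEq g g
  | symm {X Y} {g h : DTerm Φ Ψ X Y} : DEq g h → DEq h g
  | trans {X Y} {g h t : DTerm Φ Ψ X Y} : DEq g h → DEq h t → DEq g t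
  | comp_congr {X Y Z} {g g' : DTerm Φ Ψ X Y} {h h' : DTerm Φ Ψ Y Z} :
      DEq g g' → DEq h h' → DEq (.comp g h) (.comp g' h')
  | mapT_congr {X Y : Fin m → DObj m n p} {a b : ∀ i, DTerm Φ Ψ (dSrc (sx i) (X i) (Y i)) (dTgt (sx i) (X i) (Y i))} :
      (∀ i, DEq (a i) (b i)) → DEq (.mapT a) (.mapT b)
  | mapS_congr {X Y : Fin n → DObj m n p} {a b : ∀ j, DTerm Φ Ψ (dSrc (sy j) (X j) (Y j)) (dTgt (sy j) (X j) (Y j))} :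
      (∀ j, DEq (a j) (b j)) → DEq (.mapS a) (.mapS b)
  | mapR_congr {X Y : Fin p → DObj m n p} {a b : ∀ l, DTerm Φ Ψ (dSrc (sz l) (X l) (Y l)) (dTgt (sz l) (X l) (Y l))} :
      (∀ l, DEq (a l) (b l)) → DEq (.mapR a) (.mapR b)
  -- categorial equations
  | id_left {X Y} (g : DTerm Φ Ψ X Y) : DEq (.comp (.id X) g) g
  | id_right {X Y} (g : DTerm Φ Ψ X Y) : DEq (.comp g (.id Y)) g
  | assoc {X Y Z W} (g : DTerm Φ Ψ X Y) (h : DTerm Φ Ψ Y Z) (t : DTerm Φ Ψ Z W) :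
      DEq (.comp (.comp g h) t) (.comp g (.comp h t))
  -- functorial equations
  | functT {X Y Z : Fin m → DObj m n p}
      (a : ∀ i, DTerm Φ Ψ (dSrc (sx i) (X i) (Y i)) (dTgt (sx i) (X i) (Y i)))
      (b : ∀ i, DTerm Φ Ψ (dSrc (sx i) (Y i) (Z i)) (dTgt (sx i) (Y i) (Z i))) :
      DEq (.comp (.mapT a) (.mapT b)) (.mapT (fun i => dComp (sx i) (a i) (b i)))
  | functS {X Y Z : Fin n → DObj m n p}
      (a : ∀ j, DTerm Φ Ψ (dSrc (sy j) (X j) (Y j)) (dTgt (sy j) (X j) (Y j)))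
      (b : ∀ j, DTerm Φ Ψ (dSrc (sy j) (Y j) (Z j)) (dTgt (sy j) (Y j) (Z j))) :
      DEq (.comp (.mapS a) (.mapS b)) (.mapS (fun j => dComp (sy j) (a j) (b j)))
  | functR {X Y Z : Fin p → DObj m n p}
      (a : ∀ l, DTerm Φ Ψ (dSrc (sz l) (X l) (Y l)) (dTgt (sz l) (X l) (Y l)))
      (b : ∀ l, DTerm Φ Ψ (dSrc (sz l) (Y l) (Z l)) (dTgt (sz l) (Y l) (Z l))) :
      DEq (.comp (.mapR a) (.mapR b)) (.mapR (fun l => dComp (sz l) (a l) (b l)))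
  | functT_id (X : Fin m → DObj m n p) :
      DEq (.mapT (fun i => dId (X i) (sx i))) (.id (.T X))
  | functS_id (X : Fin n → DObj m n p) :
      DEq (.mapS (fun j => dId (X j) (sy j))) (.id (.S X))
  | functR_id (X : Fin p → DObj m n p) :
      DEq (.mapR (fun l => dId (X l) (sz l))) (.id (.R X))
  -- g-dinatural equations
  | alphaEq (i : Fin Φ.k) (Z : Fin Φ.k → DObj m n p) {X Y : DObj m n p}
      (t : DTerm Φ Ψ X Y) :
      DEq (.comp (.mapT (vecA Φ.πL sx i Z t))
            (.comp (.alpha (updF Z i Y)) (.mapS (vecB Φ.πR sy i Z t))))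
          (.comp (.mapT (vecC Φ.πL sx i Z t))
            (.comp (.alpha (updF Z i X)) (.mapS (vecD Φ.πR sy i Z t))))
  | betaEq (i : Fin Ψ.k) (Z : Fin Ψ.k → DObj m n p) {X Y : DObj m n p}
      (t : DTerm Φ Ψ X Y) :
      DEq (.comp (.mapS (vecA Ψ.πL sy i Z t))
            (.comp (.beta (updF Z i Y)) (.mapR (vecB Ψ.πR sz i Z t))))
          (.comp (.mapS (vecC Ψ.πL sy i Z t))
            (.comp (.beta (updF Z i X)) (.mapR (vecD Ψ.πR sz i Z t))))

end DD

section Chains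
variable {m n p gΦ gΨ : ℕ} {sx : Fin m → Bool} {sy : Fin n → Bool} {sz : Fin p → Bool}
variable {Φ : GGraph m n gΦ sx sy} {Ψ : GGraph n p gΨ sy sz}

/-- the number of occurrences of the generator `f` in a composite of primitive
morphism terms -/
def fCount : ∀ {X Y : DObj m n p}, DTerm Φ Ψ X Y → ℕ
  | _, _, .f => 1
  | _, _, .comp g h => fCount g + fCount h
  | _, _, _ => 0

/-- `Chain g` says that `g` is a composite (in any order of association) of the
identities `1_A`, `1_C` and the generator `f`; together with `fCount g ≤ 1` this
expresses that `g` is identical, up to associativity of composition, to a term of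
the form `1_C ∘ ⋯ ∘ 1_C ∘ [f] ∘ 1_A ∘ ⋯ ∘ 1_A`. -/
inductive Chain : ∀ {X Y : DObj m n p}, DTerm Φ Ψ X Y → Prop
  | f : Chain .f
  | idA : Chain (.id .A)
  | idC : Chain (.id .C)
  | comp {X Y Z} {g : DTerm Φ Ψ X Y} {h : DTerm Φ Ψ Y Z} :
      Chain g → Chain h → Chain (.comp g h)

end Chains

section BaseTerms
variable {m n p gΦ gΨ : ℕ} {sx : Fin m → Bool} {sy : Fin n → Bool} {sz : Fin p → Bool}
variable {Φ : GGraph m n gΦ sx sy} {Ψ : GGraph n p gΨ sy sz}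

def baseRank : DObj m n p → ℕ
  | .C => 1
  | _ => 0

theorem baseRank_le_one (X : DObj m n p) : baseRank X ≤ 1 := by
  cases X <;> simp [baseRank]

/-- Every generator other than `f` and the identities has a composite source, so a term
out of `A` or `C` can only climb from `A` to `C`, and each `f` climbs one step. -/
theorem chain_of_source_base {X Y : DObj m n p} (g : DTerm Φ Ψ X Y)
    (hX : X = .A ∨ X = .C) :
    (Y = .A ∨ Y = .C) ∧ Chain g ∧ baseRank X + fCount g = baseRank Y := by
  induction g with
  | f => exact ⟨.inr rfl, .f, rfl⟩
  | id X =>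
    refine ⟨hX, ?_, rfl⟩
    rcases hX with rfl | rfl
    · exact .idA
    · exact .idC
  | comp g h ihg ihh =>
    obtain ⟨hM, hg, rank_g⟩ := ihg hX
    obtain ⟨hY, hh, rank_h⟩ := ihh hM
    refine ⟨hY, hg.comp hh, ?_⟩
    simp only [fCount]
    omega
  | alpha | beta | mapT | mapS | mapR => rcases hX with h | h <;> exact nomatch h

theorem target_eq_C_of_source_C {X Y : DObj m n p} (g : DTerm Φ Ψ X Y) (hX : X = .C) :
    Y = .C := by
  obtain ⟨hY | hY, -, rank_g⟩ := chain_of_source_base g (.inr hX)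
  · subst hX hY
    simp [baseRank] at rank_g
  · exact hY

theorem deq_id_of_source_C {X Y : DObj m n p} (g : DTerm Φ Ψ X Y)
    (hX : X = .C) (hY : Y = .C) : DEq (hX ▸ hY ▸ g) (.id .C) := by
  induction g with
  | id => subst hX; exact .refl _
  | comp g h ihg ihh =>
    have hM := target_eq_C_of_source_C g hX
    subst hX hM hY
    exact (DEq.comp_congr (ihg rfl rfl) (ihh rfl rfl)).trans (.id_left _)
  | f | alpha | beta | mapT | mapS | mapR => exact nomatch hX

end BaseTerms

/-- Lemma 2.2 of the paper.  If `g : X → Y` is a morphism term of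
`𝒟` and `X ∈ {A, C}`, then `Y ∈ {A, C}` and `g` is identical, up to associativity of
composition, to a composite of zero or more occurrences of `1_C`, followed by at most
one occurrence of `f`, followed by zero or more occurrences of `1_A` (equivalently:
`g` is a composite of the identities `1_A`, `1_C` and at most one occurrence of `f`).
In particular, if `X = C` then `Y = C` and `g = 1_C` in `𝒟`. -/
theorem dterm_from_AC
    {m n p gΦ gΨ : ℕ} {sx : Fin m → Bool} {sy : Fin n → Bool} {sz : Fin p → Bool}
    {Φ : GGraph m n gΦ sx sy} {Ψ : GGraph n p gΨ sy sz} :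
    (∀ {X Y : DObj m n p} (g : DTerm Φ Ψ X Y),
      (X = DObj.A ∨ X = DObj.C) →
        (Y = DObj.A ∨ Y = DObj.C) ∧ Chain g ∧ fCount g ≤ 1) ∧
    (∀ {Y : DObj m n p} (g : DTerm Φ Ψ DObj.C Y) (hY : Y = DObj.C),
      DEq (hY ▸ g) (DTerm.id DObj.C)) := by
  refine ⟨@fun _ Y g hX => ?_, fun g hY => deq_id_of_source_C g rfl hY⟩
  obtain ⟨hY, hg, rank_g⟩ := chain_of_source_base g hX
  exact ⟨hY, hg, by have := baseRank_le_one Y; omega⟩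
end GDin
end

section
/- If g : X → Y is a morphism term of 𝒟 and Y ∈ {A, C}, then X ∈ {A, C} and g is identical, up to associativity of composition, to a composite consisting of zero or more occurrences of 1_C, followed by at most one occurrence of f, followed by zero or more occurrences of 1_A. -/
open CategoryTheory

universe u v

namespace GDin

variable {B : Type u} [Category.{v} B]

variable {ι : Type} {k : ℕ}

section Aux
variable {m n p gΦ gΨ : ℕ} {sx : Fin m → Bool} {sy : Fin n → Bool} {sz : Fin p → Bool}
variable {Φ : GGraph m n gΦ sx sy} {Ψ : GGraph n p gΨ sy sz}

theorem chain_from_C : ∀ {X Y : DObj m n p} {g : DTerm Φ Ψ X Y},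
    Chain g → X = DObj.C → fCount g = 0 ∧ Y = DObj.C := by
  intro X Y g hc
  induction hc with
  | f => intro h; exact absurd h (by simp)
  | idA => intro h; exact absurd h (by simp)
  | idC => intro _; exact ⟨rfl, rfl⟩
  | comp hg hh ihg ihh =>
      intro h
      obtain ⟨c1, m1⟩ := ihg h
      obtain ⟨c2, m2⟩ := ihh m1
      exact ⟨by simp [fCount, c1, c2], m2⟩

theorem chain_to_A : ∀ {X Y : DObj m n p} {g : DTerm Φ Ψ X Y},
    Chain g → Y = DObj.A → fCount g = 0 ∧ X = DObj.A := by
  intro X Y g hc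
  induction hc with
  | f => intro h; exact absurd h (by simp)
  | idA => intro _; exact ⟨rfl, rfl⟩
  | idC => intro h; exact absurd h (by simp)
  | comp hg hh ihg ihh =>
      intro h
      obtain ⟨c2, m2⟩ := ihh h
      obtain ⟨c1, m1⟩ := ihg m2
      exact ⟨by simp [fCount, c1, c2], m1⟩

end Aux

/-- Lemma 2.3 of the paper.  If `g : X → Y` is a morphism term of
`𝒟` and `Y ∈ {A, C}`, then `X ∈ {A, C}` and `g` is identical, up to associativity of
composition, to a composite of zero or more occurrences of `1_C`, followed by at most
one occurrence of `f`, followed by zero or more occurrences of `1_A` (equivalently: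
`g` is a composite of the identities `1_A`, `1_C` and at most one occurrence of
`f`). -/
theorem dterm_to_AC
    {m n p gΦ gΨ : ℕ} {sx : Fin m → Bool} {sy : Fin n → Bool} {sz : Fin p → Bool}
    {Φ : GGraph m n gΦ sx sy} {Ψ : GGraph n p gΨ sy sz} :
    ∀ {X Y : DObj m n p} (g : DTerm Φ Ψ X Y),
      (Y = DObj.A ∨ Y = DObj.C) →
        (X = DObj.A ∨ X = DObj.C) ∧ Chain g ∧ fCount g ≤ 1 := by
  intro X Y g
  induction g with
  | f => intro _; exact ⟨Or.inl rfl, Chain.f, by simp [fCount]⟩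
  | id X =>
      intro h
      refine ⟨h, ?_, by simp [fCount]⟩
      rcases h with h | h <;> subst h
      · exact Chain.idA
      · exact Chain.idC
  | comp g h ihg ihh =>
      intro hY
      obtain ⟨hM, ch, nh⟩ := ihh hY
      obtain ⟨hX, cg, ng⟩ := ihg hM
      refine ⟨hX, Chain.comp cg ch, ?_⟩
      rcases hM with hM | hM
      · obtain ⟨z, _⟩ := chain_to_A cg hM
        simp [fCount, z]; omega
      · obtain ⟨z, _⟩ := chain_from_C ch hM
        simp [fCount, z]; omega
  | alpha W => rintro (h | h) <;> exact absurd h (by simp)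
  | beta W => rintro (h | h) <;> exact absurd h (by simp)
  | mapT a ih => rintro (h | h) <;> exact absurd h (by simp)
  | mapS a ih => rintro (h | h) <;> exact absurd h (by simp)
  | mapR a ih => rintro (h | h) <;> exact absurd h (by simp)
end GDin
end

section
/- The CF reduction relation on morphism terms of 𝒟 is strongly normalizing and weakly Church–Rosser; consequently every morphism term g has a unique CF normal form CF(g). -/
/-!
Every `CF` contraction strictly decreases a weight that is multiplicative under composition
(identities and generators weigh `2`, `F(g₁,…,g_k)` weighs `2 ∏ wt gᵢ + 1`), which gives
strong normalization and the existence of normal forms.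

For confluence we pass to the right-nested representative `can g` of the associativity class of
`g`. A `CF` step `g ⟶ h` becomes a single step `can g ⟶ can h` of a purely syntactic
reduction `RNStep` on right-nested terms, and conversely every `RNStep` is a `CF` step. The
overlaps of `RNStep` are a merge `F(a)∘F(b)` against a step inside `a` or `b`, against an
identity `F(1,…,1)`, or against a second merge `F(b)∘F(c)`, which is resolved by associativity
of composition inside the arguments. So `RNStep` is locally confluent, hence confluent by
Newman's lemma, and two normal forms of `g` have the same right-nested representative.
-/

open CategoryTheory

universe u v

namespace GDin

variable {B : Type u} [Category.{v} B]

variable {ι : Type} {k : ℕ}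

section CFsec
variable {m n p gΦ gΨ : ℕ} {sx : Fin m → Bool} {sy : Fin n → Bool} {sz : Fin p → Bool}
variable {Φ : GGraph m n gΦ sx sy} {Ψ : GGraph n p gΨ sy sz}

/-- identity of morphism terms up to associativity of composition -/
inductive AEq : ∀ {X Y : DObj m n p}, DTerm Φ Ψ X Y → DTerm Φ Ψ X Y → Prop
  | refl {X Y} (g : DTerm Φ Ψ X Y) : AEq g g
  | symm {X Y} {g h : DTerm Φ Ψ X Y} : AEq g h → AEq h g
  | trans {X Y} {g h t : DTerm Φ Ψ X Y} : AEq g h → AEq h t → AEq g t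
  | comp_congr {X Y Z} {g g' : DTerm Φ Ψ X Y} {h h' : DTerm Φ Ψ Y Z} :
      AEq g g' → AEq h h' → AEq (.comp g h) (.comp g' h')
  | mapT_congr {X Y : Fin m → DObj m n p}
      {a b : ∀ i, DTerm Φ Ψ (dSrc (sx i) (X i) (Y i)) (dTgt (sx i) (X i) (Y i))} :
      (∀ i, AEq (a i) (b i)) → AEq (.mapT a) (.mapT b)
  | mapS_congr {X Y : Fin n → DObj m n p}
      {a b : ∀ j, DTerm Φ Ψ (dSrc (sy j) (X j) (Y j)) (dTgt (sy j) (X j) (Y j))} :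
      (∀ j, AEq (a j) (b j)) → AEq (.mapS a) (.mapS b)
  | mapR_congr {X Y : Fin p → DObj m n p}
      {a b : ∀ l, DTerm Φ Ψ (dSrc (sz l) (X l) (Y l)) (dTgt (sz l) (X l) (Y l))} :
      (∀ l, AEq (a l) (b l)) → AEq (.mapR a) (.mapR b)
  | assoc {X Y Z W} (g : DTerm Φ Ψ X Y) (h : DTerm Φ Ψ Y Z) (t : DTerm Φ Ψ Z W) :
      AEq (.comp (.comp g h) t) (.comp g (.comp h t))

/-- a single categorial-functorial (`CF`) contraction, applied in an arbitrary
subterm position -/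
inductive CFRaw : ∀ {X Y : DObj m n p}, DTerm Φ Ψ X Y → DTerm Φ Ψ X Y → Prop
  | id_left {X Y} (g : DTerm Φ Ψ X Y) : CFRaw (.comp (.id X) g) g
  | id_right {X Y} (g : DTerm Φ Ψ X Y) : CFRaw (.comp g (.id Y)) g
  | functT {X Y Z : Fin m → DObj m n p}
      (a : ∀ i, DTerm Φ Ψ (dSrc (sx i) (X i) (Y i)) (dTgt (sx i) (X i) (Y i)))
      (b : ∀ i, DTerm Φ Ψ (dSrc (sx i) (Y i) (Z i)) (dTgt (sx i) (Y i) (Z i))) :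
      CFRaw (.comp (.mapT a) (.mapT b)) (.mapT (fun i => dComp (sx i) (a i) (b i)))
  | functS {X Y Z : Fin n → DObj m n p}
      (a : ∀ j, DTerm Φ Ψ (dSrc (sy j) (X j) (Y j)) (dTgt (sy j) (X j) (Y j)))
      (b : ∀ j, DTerm Φ Ψ (dSrc (sy j) (Y j) (Z j)) (dTgt (sy j) (Y j) (Z j))) :
      CFRaw (.comp (.mapS a) (.mapS b)) (.mapS (fun j => dComp (sy j) (a j) (b j)))
  | functR {X Y Z : Fin p → DObj m n p}
      (a : ∀ l, DTerm Φ Ψ (dSrc (sz l) (X l) (Y l)) (dTgt (sz l) (X l) (Y l)))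
      (b : ∀ l, DTerm Φ Ψ (dSrc (sz l) (Y l) (Z l)) (dTgt (sz l) (Y l) (Z l))) :
      CFRaw (.comp (.mapR a) (.mapR b)) (.mapR (fun l => dComp (sz l) (a l) (b l)))
  | functT_id (X : Fin m → DObj m n p) :
      CFRaw (.mapT (fun i => dId (X i) (sx i))) (.id (.T X))
  | functS_id (X : Fin n → DObj m n p) :
      CFRaw (.mapS (fun j => dId (X j) (sy j))) (.id (.S X))
  | functR_id (X : Fin p → DObj m n p) :
      CFRaw (.mapR (fun l => dId (X l) (sz l))) (.id (.R X))
  | comp_left {X Y Z} {g g' : DTerm Φ Ψ X Y} (h : DTerm Φ Ψ Y Z) :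
      CFRaw g g' → CFRaw (.comp g h) (.comp g' h)
  | comp_right {X Y Z} (g : DTerm Φ Ψ X Y) {h h' : DTerm Φ Ψ Y Z} :
      CFRaw h h' → CFRaw (.comp g h) (.comp g h')
  | mapT_arg {X Y : Fin m → DObj m n p}
      (a : ∀ i, DTerm Φ Ψ (dSrc (sx i) (X i) (Y i)) (dTgt (sx i) (X i) (Y i)))
      (i₀ : Fin m) (t' : DTerm Φ Ψ (dSrc (sx i₀) (X i₀) (Y i₀)) (dTgt (sx i₀) (X i₀) (Y i₀))) :
      CFRaw (a i₀) t' → CFRaw (.mapT a) (.mapT (Function.update a i₀ t'))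
  | mapS_arg {X Y : Fin n → DObj m n p}
      (a : ∀ j, DTerm Φ Ψ (dSrc (sy j) (X j) (Y j)) (dTgt (sy j) (X j) (Y j)))
      (j₀ : Fin n) (t' : DTerm Φ Ψ (dSrc (sy j₀) (X j₀) (Y j₀)) (dTgt (sy j₀) (X j₀) (Y j₀))) :
      CFRaw (a j₀) t' → CFRaw (.mapS a) (.mapS (Function.update a j₀ t'))
  | mapR_arg {X Y : Fin p → DObj m n p}
      (a : ∀ l, DTerm Φ Ψ (dSrc (sz l) (X l) (Y l)) (dTgt (sz l) (X l) (Y l)))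
      (l₀ : Fin p) (t' : DTerm Φ Ψ (dSrc (sz l₀) (X l₀) (Y l₀)) (dTgt (sz l₀) (X l₀) (Y l₀))) :
      CFRaw (a l₀) t' → CFRaw (.mapR a) (.mapR (Function.update a l₀ t'))

/-- a `CF` reduction step on morphism terms identified up to associativity of
composition -/
def CFStep {X Y : DObj m n p} (g h : DTerm Φ Ψ X Y) : Prop :=
  ∃ g' h', AEq g g' ∧ CFRaw g' h' ∧ AEq h' h

/-- `g` is in `CF` normal form -/
def CFNormal {X Y : DObj m n p} (g : DTerm Φ Ψ X Y) : Prop := ¬ ∃ h, CFStep g h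

end CFsec

end GDin

namespace Relation

variable {α : Type*} {r : α → α → Prop}

theorem newman (P : α → Prop) (hP : ∀ {a b}, P a → r a b → P b) (wf : WellFounded (flip r))
    (hlc : ∀ {a b c}, P a → r a b → r a c → Join (ReflTransGen r) b c) :
    ∀ {a b c}, P a → ReflTransGen r a b → ReflTransGen r a c →
      Join (ReflTransGen r) b c := by
  intro a
  induction a using wf.induction with
  | _ a ih =>
  intro b c ha hab hac
  rcases hab.cases_head with rfl | ⟨b₁, hab₁, hb₁b⟩
  · exact ⟨c, hac, .refl⟩
  rcases hac.cases_head with rfl | ⟨c₁, hac₁, hc₁c⟩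
  · exact ⟨b, .refl, hab⟩
  obtain ⟨d, hb₁d, hc₁d⟩ := hlc ha hab₁ hac₁
  obtain ⟨e, hbe, hde⟩ := ih b₁ hab₁ (hP ha hab₁) hb₁b hb₁d
  obtain ⟨f, hef, hcf⟩ := ih c₁ hac₁ (hP ha hac₁) (hc₁d.trans hde) hc₁c
  exact ⟨f, hbe.trans hef, hcf⟩

section Update

variable {ι : Type*} [DecidableEq ι] {β : ι → Type*} {s : ∀ i, β i → β i → Prop}
  {F : (∀ i, β i) → α}

theorem ReflTransGen.update (hF : ∀ a i x, s i (a i) x → r (F a) (F (Function.update a i x)))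
    (a : ∀ i, β i) (i : ι) {x y : β i} (h : ReflTransGen (s i) x y) :
    ReflTransGen r (F (Function.update a i x)) (F (Function.update a i y)) :=
  ReflTransGen.lift (fun z => F (Function.update a i z))
    (fun z w hzw => by
      simpa using hF (Function.update a i z) i w (by simpa using hzw)) x y h

theorem ReflTransGen.pi [Fintype ι]
    (hF : ∀ a i x, s i (a i) x → r (F a) (F (Function.update a i x)))
    {a b : ∀ i, β i} (h : ∀ i, ReflTransGen (s i) (a i) (b i)) :
    ReflTransGen r (F a) (F b) := by
  suffices ∀ t : Finset ι, ReflTransGen r (F a) (F (t.piecewise b a)) by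
    simpa using this Finset.univ
  intro t
  induction t using Finset.induction with
  | empty => simp [ReflTransGen.refl]
  | insert j t hj ih =>
    rw [Finset.piecewise_insert]
    refine ih.trans ?_
    simpa using ReflTransGen.update hF (t.piecewise b a) j
      (x := t.piecewise b a j) (by rw [Finset.piecewise_eq_of_notMem _ _ _ hj]; exact h j)

theorem join_update (hF : ∀ a i x, s i (a i) x → r (F a) (F (Function.update a i x)))
    (a : ∀ i, β i)
    (hlc : ∀ i {x y}, s i (a i) x → s i (a i) y → Join (ReflTransGen (s i)) x y)
    {i j : ι} {x : β i} {y : β j} (hx : s i (a i) x) (hy : s j (a j) y) :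
    Join (ReflTransGen r) (F (Function.update a i x)) (F (Function.update a j y)) := by
  by_cases hij : i = j
  · subst hij
    obtain ⟨z, hxz, hyz⟩ := hlc i hx hy
    exact ⟨_, ReflTransGen.update hF a i hxz, ReflTransGen.update hF a i hyz⟩
  · refine ⟨F (Function.update (Function.update a i x) j y), .single ?_, .single ?_⟩
    · exact hF _ j y (by rwa [Function.update_of_ne (Ne.symm hij)])
    · rw [Function.update_comm hij]
      exact hF _ i x (by rwa [Function.update_of_ne hij])

end Update

end Relation

namespace GDin

section

variable {m n p gΦ gΨ : ℕ} {sx : Fin m → Bool} {sy : Fin n → Bool} {sz : Fin p → Bool}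
  {Φ : GGraph m n gΦ sx sy} {Ψ : GGraph n p gΨ sy sz}

open Relation

/-! ### The weight -/

def wt : ∀ {X Y : DObj m n p}, DTerm Φ Ψ X Y → ℕ
  | _, _, .f => 2
  | _, _, .id _ => 2
  | _, _, .alpha _ => 2
  | _, _, .beta _ => 2
  | _, _, .comp g h => wt g * wt h
  | _, _, .mapT a => 2 * ∏ i, wt (a i) + 1
  | _, _, .mapS a => 2 * ∏ j, wt (a j) + 1
  | _, _, .mapR a => 2 * ∏ l, wt (a l) + 1

theorem prod_wt_pos {ι : Type} [Fintype ι] {S T : ι → DObj m n p}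
    (a : ∀ i, DTerm Φ Ψ (S i) (T i)) (two_le : ∀ i, 2 ≤ wt (a i)) : 0 < ∏ i, wt (a i) :=
  Finset.prod_pos fun i _ => by linarith [two_le i]

theorem two_le_wt {X Y : DObj m n p} (g : DTerm Φ Ψ X Y) : 2 ≤ wt g := by
  induction g with
  | comp _ _ ihg ihh => exact le_trans (by norm_num) (Nat.mul_le_mul ihg ihh)
  | mapT a ih => have := prod_wt_pos a ih; simp only [wt]; omega
  | mapS a ih => have := prod_wt_pos a ih; simp only [wt]; omega
  | mapR a ih => have := prod_wt_pos a ih; simp only [wt]; omega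
  | _ => exact le_rfl

theorem wt_dComp {X Y Z : DObj m n p} (b : Bool)
    (g : DTerm Φ Ψ (dSrc b X Y) (dTgt b X Y)) (h : DTerm Φ Ψ (dSrc b Y Z) (dTgt b Y Z)) :
    wt (dComp b g h) = wt g * wt h := by
  cases b <;> simp [dComp, wt, Nat.mul_comm]

theorem AEq.wt_eq {X Y : DObj m n p} {g h : DTerm Φ Ψ X Y} (e : AEq g h) : wt g = wt h := by
  induction e with
  | refl => rfl
  | symm _ ih => exact ih.symm
  | trans _ _ ih₁ ih₂ => exact ih₁.trans ih₂
  | comp_congr _ _ ih₁ ih₂ => simp only [wt, ih₁, ih₂]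
  | mapT_congr _ ih => simp only [wt, ih]
  | mapS_congr _ ih => simp only [wt, ih]
  | mapR_congr _ ih => simp only [wt, ih]
  | assoc => simp only [wt, Nat.mul_assoc]

theorem prod_wt_update_lt {ι : Type} [Fintype ι] [DecidableEq ι] {S T : ι → DObj m n p}
    (a : ∀ i, DTerm Φ Ψ (S i) (T i)) (i : ι) {t : DTerm Φ Ψ (S i) (T i)}
    (ht : wt t < wt (a i)) : ∏ k, wt (Function.update a i t k) < ∏ k, wt (a k) := by
  simp only [Function.apply_update (fun _ => wt), Finset.prod_update_of_mem (Finset.mem_univ i)]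
  rw [← Finset.mul_prod_erase _ _ (Finset.mem_univ i), Finset.sdiff_singleton_eq_erase]
  exact Nat.mul_lt_mul_of_lt_of_le ht le_rfl
    (Finset.prod_pos fun k _ => by linarith [two_le_wt (a k)])

theorem two_mul_mul_add_one_lt {P Q : ℕ} (hP : 0 < P) :
    2 * (P * Q) + 1 < (2 * P + 1) * (2 * Q + 1) := by
  nlinarith [Nat.zero_le (P * Q)]

theorem CFRaw.wt_lt {X Y : DObj m n p} {g h : DTerm Φ Ψ X Y} (r : CFRaw g h) :
    wt h < wt g := by
  induction r with
  | id_left g => have := two_le_wt g; simp only [wt]; omega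
  | id_right g => have := two_le_wt g; simp only [wt]; omega
  | functT a _ =>
    simp only [wt, wt_dComp, Finset.prod_mul_distrib]
    exact two_mul_mul_add_one_lt (prod_wt_pos a fun _ => two_le_wt _)
  | functS a _ =>
    simp only [wt, wt_dComp, Finset.prod_mul_distrib]
    exact two_mul_mul_add_one_lt (prod_wt_pos a fun _ => two_le_wt _)
  | functR a _ =>
    simp only [wt, wt_dComp, Finset.prod_mul_distrib]
    exact two_mul_mul_add_one_lt (prod_wt_pos a fun _ => two_le_wt _)
  | functT_id X =>
    have := prod_wt_pos (fun i => dId (Φ := Φ) (Ψ := Ψ) (X i) (sx i)) fun _ => two_le_wt _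
    simp only [wt]; omega
  | functS_id X =>
    have := prod_wt_pos (fun i => dId (Φ := Φ) (Ψ := Ψ) (X i) (sy i)) fun _ => two_le_wt _
    simp only [wt]; omega
  | functR_id X =>
    have := prod_wt_pos (fun i => dId (Φ := Φ) (Ψ := Ψ) (X i) (sz i)) fun _ => two_le_wt _
    simp only [wt]; omega
  | comp_left h _ ih => have := two_le_wt h; simp only [wt]; nlinarith
  | comp_right g _ ih => have := two_le_wt g; simp only [wt]; nlinarith
  | mapT_arg a i _ _ ih => have := prod_wt_update_lt a i ih; simp only [wt]; omega
  | mapS_arg a i _ _ ih => have := prod_wt_update_lt a i ih; simp only [wt]; omega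
  | mapR_arg a i _ _ ih => have := prod_wt_update_lt a i ih; simp only [wt]; omega

theorem CFStep.wt_lt {X Y : DObj m n p} {g h : DTerm Φ Ψ X Y} (s : CFStep g h) : wt h < wt g := by
  obtain ⟨_, _, e₁, r, e₂⟩ := s
  rw [e₁.wt_eq, ← e₂.wt_eq]
  exact r.wt_lt

theorem wellFounded_flip_cfStep {X Y : DObj m n p} :
    WellFounded (flip (CFStep (Φ := Φ) (Ψ := Ψ) (X := X) (Y := Y))) :=
  (InvImage.wf wt wellFounded_lt).mono fun _ _ s => s.wt_lt

/-! ### Right-nested representatives -/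

def app : ∀ {X Y Z : DObj m n p}, DTerm Φ Ψ X Y → DTerm Φ Ψ Y Z → DTerm Φ Ψ X Z
  | _, _, _, .comp g₁ g₂, h => .comp g₁ (app g₂ h)
  | _, _, _, g, h => .comp g h

def dApp {X Y Z : DObj m n p} : (b : Bool) →
    DTerm Φ Ψ (dSrc b X Y) (dTgt b X Y) → DTerm Φ Ψ (dSrc b Y Z) (dTgt b Y Z) →
    DTerm Φ Ψ (dSrc b X Z) (dTgt b X Z)
  | true, g, h => app g h
  | false, g, h => app h g

def can : ∀ {X Y : DObj m n p}, DTerm Φ Ψ X Y → DTerm Φ Ψ X Y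
  | _, _, .comp g h => app (can g) (can h)
  | _, _, .mapT a => .mapT fun i => can (a i)
  | _, _, .mapS a => .mapS fun j => can (a j)
  | _, _, .mapR a => .mapR fun l => can (a l)
  | _, _, g => g

def NotComp {X Y : DObj m n p} : DTerm Φ Ψ X Y → Prop
  | .comp _ _ => False
  | _ => True

theorem app_of_notComp {X Y Z : DObj m n p} {g : DTerm Φ Ψ X Y} (hg : NotComp g)
    (h : DTerm Φ Ψ Y Z) : app g h = .comp g h := by
  cases g <;> first | rfl | exact hg.elim

theorem app_assoc {X Y Z W : DObj m n p} (g : DTerm Φ Ψ X Y) (h : DTerm Φ Ψ Y Z)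
    (t : DTerm Φ Ψ Z W) : app (app g h) t = app g (app h t) := by
  induction g with
  | comp g₁ g₂ _ ih => simp only [app, ih]
  | _ => rfl

theorem dApp_assoc {X Y Z W : DObj m n p} (b : Bool)
    (g : DTerm Φ Ψ (dSrc b X Y) (dTgt b X Y)) (h : DTerm Φ Ψ (dSrc b Y Z) (dTgt b Y Z))
    (t : DTerm Φ Ψ (dSrc b Z W) (dTgt b Z W)) :
    dApp b (dApp b g h) t = dApp b g (dApp b h t) := by
  cases b
  · exact (app_assoc t h g).symm
  · exact app_assoc g h t

theorem aeq_comp_app {X Y Z : DObj m n p} (g : DTerm Φ Ψ X Y) (h : DTerm Φ Ψ Y Z) :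
    AEq (.comp g h) (app g h) := by
  induction g with
  | comp g₁ g₂ _ ih => exact (AEq.assoc g₁ g₂ h).trans (AEq.comp_congr (AEq.refl _) (ih h))
  | _ => exact AEq.refl _

theorem aeq_can {X Y : DObj m n p} (g : DTerm Φ Ψ X Y) : AEq g (can g) := by
  induction g with
  | comp _ _ ihg ihh => exact (AEq.comp_congr ihg ihh).trans (aeq_comp_app _ _)
  | mapT _ ih => exact AEq.mapT_congr ih
  | mapS _ ih => exact AEq.mapS_congr ih
  | mapR _ ih => exact AEq.mapR_congr ih
  | _ => exact AEq.refl _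

theorem AEq.can_eq {X Y : DObj m n p} {g h : DTerm Φ Ψ X Y} (e : AEq g h) : can g = can h := by
  induction e with
  | refl => rfl
  | symm _ ih => exact ih.symm
  | trans _ _ ih₁ ih₂ => exact ih₁.trans ih₂
  | comp_congr _ _ ih₁ ih₂ => simp only [can, ih₁, ih₂]
  | mapT_congr _ ih => simp only [can, ih]
  | mapS_congr _ ih => simp only [can, ih]
  | mapR_congr _ ih => simp only [can, ih]
  | assoc => simp only [can, app_assoc]

theorem can_dComp {X Y Z : DObj m n p} (b : Bool)
    (g : DTerm Φ Ψ (dSrc b X Y) (dTgt b X Y)) (h : DTerm Φ Ψ (dSrc b Y Z) (dTgt b Y Z)) :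
    can (dComp b g h) = dApp b (can g) (can h) := by
  cases b <;> rfl

theorem can_dId (X : DObj m n p) (b : Bool) : can (dId (Φ := Φ) (Ψ := Ψ) X b) = dId X b := by
  cases b <;> rfl

theorem aeq_iff_can_eq {X Y : DObj m n p} {g h : DTerm Φ Ψ X Y} : AEq g h ↔ can g = can h :=
  ⟨AEq.can_eq, fun e => (aeq_can g).trans (e ▸ (aeq_can h).symm)⟩

inductive RightNested : ∀ {X Y : DObj m n p}, DTerm Φ Ψ X Y → Prop
  | f : RightNested .f
  | id {X} : RightNested (.id X)
  | alpha (W) : RightNested (.alpha W)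
  | beta (W) : RightNested (.beta W)
  | mapT {X Y : Fin m → DObj m n p}
      {a : ∀ i, DTerm Φ Ψ (dSrc (sx i) (X i) (Y i)) (dTgt (sx i) (X i) (Y i))} :
      (∀ i, RightNested (a i)) → RightNested (.mapT a)
  | mapS {X Y : Fin n → DObj m n p}
      {a : ∀ j, DTerm Φ Ψ (dSrc (sy j) (X j) (Y j)) (dTgt (sy j) (X j) (Y j))} :
      (∀ j, RightNested (a j)) → RightNested (.mapS a)
  | mapR {X Y : Fin p → DObj m n p}
      {a : ∀ l, DTerm Φ Ψ (dSrc (sz l) (X l) (Y l)) (dTgt (sz l) (X l) (Y l))} :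
      (∀ l, RightNested (a l)) → RightNested (.mapR a)
  | comp {X Y Z} {t : DTerm Φ Ψ X Y} {w : DTerm Φ Ψ Y Z} :
      NotComp t → RightNested t → RightNested w → RightNested (.comp t w)

theorem RightNested.app {X Y Z : DObj m n p} {g : DTerm Φ Ψ X Y} {h : DTerm Φ Ψ Y Z}
    (hg : RightNested g) (hh : RightNested h) : RightNested (app g h) := by
  induction hg with
  | comp hnc ht _ _ ih => exact .comp hnc ht (ih hh)
  | f => exact .comp trivial .f hh
  | id => exact .comp trivial .id hh
  | alpha W => exact .comp trivial (.alpha W) hh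
  | beta W => exact .comp trivial (.beta W) hh
  | mapT ha => exact .comp trivial (.mapT ha) hh
  | mapS ha => exact .comp trivial (.mapS ha) hh
  | mapR ha => exact .comp trivial (.mapR ha) hh

theorem RightNested.dApp {X Y Z : DObj m n p} (b : Bool)
    {g : DTerm Φ Ψ (dSrc b X Y) (dTgt b X Y)} {h : DTerm Φ Ψ (dSrc b Y Z) (dTgt b Y Z)}
    (hg : RightNested g) (hh : RightNested h) : RightNested (dApp b g h) := by
  cases b
  · exact hh.app hg
  · exact hg.app hh

theorem RightNested.mapT_args {X Y : Fin m → DObj m n p}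
    {a : ∀ i, DTerm Φ Ψ (dSrc (sx i) (X i) (Y i)) (dTgt (sx i) (X i) (Y i))} :
    RightNested (.mapT a) → ∀ i, RightNested (a i)
  | .mapT h => h

theorem RightNested.mapS_args {X Y : Fin n → DObj m n p}
    {a : ∀ j, DTerm Φ Ψ (dSrc (sy j) (X j) (Y j)) (dTgt (sy j) (X j) (Y j))} :
    RightNested (.mapS a) → ∀ j, RightNested (a j)
  | .mapS h => h

theorem RightNested.mapR_args {X Y : Fin p → DObj m n p}
    {a : ∀ l, DTerm Φ Ψ (dSrc (sz l) (X l) (Y l)) (dTgt (sz l) (X l) (Y l))} :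
    RightNested (.mapR a) → ∀ l, RightNested (a l)
  | .mapR h => h

theorem rightNested_can {X Y : DObj m n p} (g : DTerm Φ Ψ X Y) : RightNested (can g) := by
  induction g with
  | comp _ _ ihg ihh => exact ihg.app ihh
  | mapT _ ih => exact RightNested.mapT ih
  | mapS _ ih => exact RightNested.mapS ih
  | mapR _ ih => exact RightNested.mapR ih
  | f => exact RightNested.f
  | id => exact RightNested.id
  | alpha => exact RightNested.alpha _
  | beta => exact RightNested.beta _

/-! ### Reduction of right-nested terms -/

/-- A merge of two functor images either ends a right-nested composite (`merge2`) or is followed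
by a remainder `w` (`merge3`). -/
inductive RNContr : ∀ {X Y : DObj m n p}, DTerm Φ Ψ X Y → DTerm Φ Ψ X Y → Prop
  | idL {X Y} (h : DTerm Φ Ψ X Y) : RNContr (.comp (.id X) h) h
  | idR {X Y} (g : DTerm Φ Ψ X Y) : RNContr (.comp g (.id Y)) g
  | merge2T {X Y Z : Fin m → DObj m n p}
      (a : ∀ i, DTerm Φ Ψ (dSrc (sx i) (X i) (Y i)) (dTgt (sx i) (X i) (Y i)))
      (b : ∀ i, DTerm Φ Ψ (dSrc (sx i) (Y i) (Z i)) (dTgt (sx i) (Y i) (Z i))) :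
      RNContr (.comp (.mapT a) (.mapT b)) (.mapT fun i => dApp (sx i) (a i) (b i))
  | merge2S {X Y Z : Fin n → DObj m n p}
      (a : ∀ j, DTerm Φ Ψ (dSrc (sy j) (X j) (Y j)) (dTgt (sy j) (X j) (Y j)))
      (b : ∀ j, DTerm Φ Ψ (dSrc (sy j) (Y j) (Z j)) (dTgt (sy j) (Y j) (Z j))) :
      RNContr (.comp (.mapS a) (.mapS b)) (.mapS fun j => dApp (sy j) (a j) (b j))
  | merge2R {X Y Z : Fin p → DObj m n p}
      (a : ∀ l, DTerm Φ Ψ (dSrc (sz l) (X l) (Y l)) (dTgt (sz l) (X l) (Y l)))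
      (b : ∀ l, DTerm Φ Ψ (dSrc (sz l) (Y l) (Z l)) (dTgt (sz l) (Y l) (Z l))) :
      RNContr (.comp (.mapR a) (.mapR b)) (.mapR fun l => dApp (sz l) (a l) (b l))
  | merge3T {X Y Z : Fin m → DObj m n p} {W : DObj m n p}
      (a : ∀ i, DTerm Φ Ψ (dSrc (sx i) (X i) (Y i)) (dTgt (sx i) (X i) (Y i)))
      (b : ∀ i, DTerm Φ Ψ (dSrc (sx i) (Y i) (Z i)) (dTgt (sx i) (Y i) (Z i)))
      (w : DTerm Φ Ψ (.T Z) W) :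
      RNContr (.comp (.mapT a) (.comp (.mapT b) w))
        (.comp (.mapT fun i => dApp (sx i) (a i) (b i)) w)
  | merge3S {X Y Z : Fin n → DObj m n p} {W : DObj m n p}
      (a : ∀ j, DTerm Φ Ψ (dSrc (sy j) (X j) (Y j)) (dTgt (sy j) (X j) (Y j)))
      (b : ∀ j, DTerm Φ Ψ (dSrc (sy j) (Y j) (Z j)) (dTgt (sy j) (Y j) (Z j)))
      (w : DTerm Φ Ψ (.S Z) W) :
      RNContr (.comp (.mapS a) (.comp (.mapS b) w))
        (.comp (.mapS fun j => dApp (sy j) (a j) (b j)) w)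
  | merge3R {X Y Z : Fin p → DObj m n p} {W : DObj m n p}
      (a : ∀ l, DTerm Φ Ψ (dSrc (sz l) (X l) (Y l)) (dTgt (sz l) (X l) (Y l)))
      (b : ∀ l, DTerm Φ Ψ (dSrc (sz l) (Y l) (Z l)) (dTgt (sz l) (Y l) (Z l)))
      (w : DTerm Φ Ψ (.R Z) W) :
      RNContr (.comp (.mapR a) (.comp (.mapR b) w))
        (.comp (.mapR fun l => dApp (sz l) (a l) (b l)) w)
  | collapseT (X : Fin m → DObj m n p) :
      RNContr (.mapT fun i => dId (X i) (sx i)) (.id (.T X))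
  | collapseS (X : Fin n → DObj m n p) :
      RNContr (.mapS fun j => dId (X j) (sy j)) (.id (.S X))
  | collapseR (X : Fin p → DObj m n p) :
      RNContr (.mapR fun l => dId (X l) (sz l)) (.id (.R X))

inductive RNStep : ∀ {X Y : DObj m n p}, DTerm Φ Ψ X Y → DTerm Φ Ψ X Y → Prop
  | root {X Y} {g h : DTerm Φ Ψ X Y} : RNContr g h → RNStep g h
  | head {X Y Z} {t t' : DTerm Φ Ψ X Y} (w : DTerm Φ Ψ Y Z) :
      RNStep t t' → RNStep (.comp t w) (.comp t' w)
  | tail {X Y Z} (t : DTerm Φ Ψ X Y) {w w' : DTerm Φ Ψ Y Z} :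
      RNStep w w' → RNStep (.comp t w) (.comp t w')
  | argT {X Y : Fin m → DObj m n p}
      (a : ∀ i, DTerm Φ Ψ (dSrc (sx i) (X i) (Y i)) (dTgt (sx i) (X i) (Y i)))
      (i : Fin m) (t : DTerm Φ Ψ (dSrc (sx i) (X i) (Y i)) (dTgt (sx i) (X i) (Y i))) :
      RNStep (a i) t → RNStep (.mapT a) (.mapT (Function.update a i t))
  | argS {X Y : Fin n → DObj m n p}
      (a : ∀ j, DTerm Φ Ψ (dSrc (sy j) (X j) (Y j)) (dTgt (sy j) (X j) (Y j)))
      (j : Fin n) (t : DTerm Φ Ψ (dSrc (sy j) (X j) (Y j)) (dTgt (sy j) (X j) (Y j))) :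
      RNStep (a j) t → RNStep (.mapS a) (.mapS (Function.update a j t))
  | argR {X Y : Fin p → DObj m n p}
      (a : ∀ l, DTerm Φ Ψ (dSrc (sz l) (X l) (Y l)) (dTgt (sz l) (X l) (Y l)))
      (l : Fin p) (t : DTerm Φ Ψ (dSrc (sz l) (X l) (Y l)) (dTgt (sz l) (X l) (Y l))) :
      RNStep (a l) t → RNStep (.mapR a) (.mapR (Function.update a l t))

theorem CFStep.of_aeq {X Y : DObj m n p} {g g' h : DTerm Φ Ψ X Y} (e : AEq g' g)
    (s : CFStep g h) : CFStep g' h :=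
  let ⟨u, v, e₁, r, e₂⟩ := s
  ⟨u, v, e.trans e₁, r, e₂⟩

theorem CFStep.comp_left {X Y Z : DObj m n p} {g g' : DTerm Φ Ψ X Y} (h : DTerm Φ Ψ Y Z)
    (s : CFStep g g') : CFStep (.comp g h) (.comp g' h) :=
  let ⟨_, _, e₁, r, e₂⟩ := s
  ⟨_, _, e₁.comp_congr (.refl h), r.comp_left h, e₂.comp_congr (.refl h)⟩

theorem CFStep.comp_right {X Y Z : DObj m n p} (g : DTerm Φ Ψ X Y) {h h' : DTerm Φ Ψ Y Z}
    (s : CFStep h h') : CFStep (.comp g h) (.comp g h') :=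
  let ⟨_, _, e₁, r, e₂⟩ := s
  ⟨_, _, (AEq.refl g).comp_congr e₁, r.comp_right g, (AEq.refl g).comp_congr e₂⟩

theorem aeq_update {ι : Type} [DecidableEq ι] {S T : ι → DObj m n p}
    (a : ∀ k, DTerm Φ Ψ (S k) (T k)) (i : ι) {x y : DTerm Φ Ψ (S i) (T i)} (e : AEq x y)
    (k : ι) : AEq (Function.update a i x k) (Function.update a i y k) := by
  by_cases hk : k = i
  · subst hk; simpa using e
  · simpa [hk] using AEq.refl (a k)

theorem CFStep.update {ι : Type} [DecidableEq ι] {S T : ι → DObj m n p} {X Y : DObj m n p}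
    {F : (∀ k, DTerm Φ Ψ (S k) (T k)) → DTerm Φ Ψ X Y}
    (hA : ∀ a b, (∀ k, AEq (a k) (b k)) → AEq (F a) (F b))
    (hR : ∀ a i t, CFRaw (a i) t → CFRaw (F a) (F (Function.update a i t)))
    (a : ∀ k, DTerm Φ Ψ (S k) (T k)) (i : ι) {t : DTerm Φ Ψ (S i) (T i)}
    (s : CFStep (a i) t) : CFStep (F a) (F (Function.update a i t)) := by
  obtain ⟨u, v, e₁, r, e₂⟩ := s
  refine ⟨F (Function.update a i u), F (Function.update a i v), ?_, ?_, ?_⟩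
  · simpa using hA _ _ (aeq_update a i e₁)
  · simpa using hR (Function.update a i u) i v (by simpa using r)
  · exact hA _ _ (aeq_update a i e₂)

theorem aeq_dComp_dApp {X Y Z : DObj m n p} (b : Bool)
    (g : DTerm Φ Ψ (dSrc b X Y) (dTgt b X Y)) (h : DTerm Φ Ψ (dSrc b Y Z) (dTgt b Y Z)) :
    AEq (dComp b g h) (dApp b g h) := by
  cases b
  · exact aeq_comp_app h g
  · exact aeq_comp_app g h

theorem RNContr.toCFStep {X Y : DObj m n p} {g h : DTerm Φ Ψ X Y} (r : RNContr g h) :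
    CFStep g h := by
  cases r with
  | idL => exact ⟨_, _, .refl _, .id_left _, .refl _⟩
  | idR => exact ⟨_, _, .refl _, .id_right _, .refl _⟩
  | merge2T a b => exact ⟨_, _, .refl _, .functT a b, .mapT_congr fun _ => aeq_dComp_dApp ..⟩
  | merge2S a b => exact ⟨_, _, .refl _, .functS a b, .mapS_congr fun _ => aeq_dComp_dApp ..⟩
  | merge2R a b => exact ⟨_, _, .refl _, .functR a b, .mapR_congr fun _ => aeq_dComp_dApp ..⟩
  | merge3T a b w =>
    exact ⟨_, _, (AEq.assoc _ _ w).symm, (CFRaw.functT a b).comp_left w,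
      (AEq.mapT_congr fun _ => aeq_dComp_dApp ..).comp_congr (.refl w)⟩
  | merge3S a b w =>
    exact ⟨_, _, (AEq.assoc _ _ w).symm, (CFRaw.functS a b).comp_left w,
      (AEq.mapS_congr fun _ => aeq_dComp_dApp ..).comp_congr (.refl w)⟩
  | merge3R a b w =>
    exact ⟨_, _, (AEq.assoc _ _ w).symm, (CFRaw.functR a b).comp_left w,
      (AEq.mapR_congr fun _ => aeq_dComp_dApp ..).comp_congr (.refl w)⟩
  | collapseT X => exact ⟨_, _, .refl _, .functT_id X, .refl _⟩
  | collapseS X => exact ⟨_, _, .refl _, .functS_id X, .refl _⟩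
  | collapseR X => exact ⟨_, _, .refl _, .functR_id X, .refl _⟩

theorem RNStep.toCFStep {X Y : DObj m n p} {g h : DTerm Φ Ψ X Y} (s : RNStep g h) :
    CFStep g h := by
  induction s with
  | root r => exact r.toCFStep
  | head w _ ih => exact ih.comp_left w
  | tail t _ ih => exact ih.comp_right t
  | argT a i _ _ ih => exact CFStep.update (fun _ _ => .mapT_congr) (.mapT_arg) a i ih
  | argS a j _ _ ih => exact CFStep.update (fun _ _ => .mapS_congr) (.mapS_arg) a j ih
  | argR a l _ _ ih => exact CFStep.update (fun _ _ => .mapR_congr) (.mapR_arg) a l ih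

theorem RNStep.app_left {X Y Z : DObj m n p} {g g' : DTerm Φ Ψ X Y} (hg : RightNested g)
    (s : RNStep g g') (h : DTerm Φ Ψ Y Z) : RNStep (app g h) (app g' h) := by
  induction s with
  | root r =>
    cases r with
    | idL => exact .root (.idL _)
    | idR =>
      cases hg with
      | comp hnc _ _ => rw [app_of_notComp hnc]; exact .tail _ (.root (.idL h))
    | merge2T a b => exact .root (.merge3T a b h)
    | merge2S a b => exact .root (.merge3S a b h)
    | merge2R a b => exact .root (.merge3R a b h)
    | merge3T a b w => exact .root (.merge3T a b (app w h))
    | merge3S a b w => exact .root (.merge3S a b (app w h))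
    | merge3R a b w => exact .root (.merge3R a b (app w h))
    | collapseT => exact .head h (.root (.collapseT _))
    | collapseS => exact .head h (.root (.collapseS _))
    | collapseR => exact .head h (.root (.collapseR _))
  | head _ s => exact .head _ s
  | tail t _ ih => cases hg with | comp _ _ hw => exact .tail t (ih hw h)
  | argT a i t s => exact .head h (.argT a i t s)
  | argS a j t s => exact .head h (.argS a j t s)
  | argR a l t s => exact .head h (.argR a l t s)

theorem RNStep.app_right {X Y Z : DObj m n p} (g : DTerm Φ Ψ X Y) {h h' : DTerm Φ Ψ Y Z}
    (s : RNStep h h') : RNStep (app g h) (app g h') := by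
  induction g with
  | comp g₁ g₂ _ ih => exact .tail g₁ (ih s)
  | _ => exact .tail _ s

theorem RNStep.app_id {X Y : DObj m n p} (g : DTerm Φ Ψ X Y) : RNStep (app g (.id Y)) g := by
  induction g with
  | comp g₁ g₂ _ ih => exact .tail g₁ ih
  | _ => exact .root (.idR _)

theorem CFRaw.can_rnStep {X Y : DObj m n p} {g h : DTerm Φ Ψ X Y} (r : CFRaw g h) :
    RNStep (can g) (can h) := by
  induction r with
  | id_left => exact .root (.idL _)
  | id_right => exact RNStep.app_id _
  | functT => simp only [can, can_dComp]; exact .root (.merge2T _ _)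
  | functS => simp only [can, can_dComp]; exact .root (.merge2S _ _)
  | functR => simp only [can, can_dComp]; exact .root (.merge2R _ _)
  | functT_id X => simp only [can, can_dId]; exact .root (.collapseT X)
  | functS_id X => simp only [can, can_dId]; exact .root (.collapseS X)
  | functR_id X => simp only [can, can_dId]; exact .root (.collapseR X)
  | comp_left _ _ ih => exact ih.app_left (rightNested_can _) _
  | comp_right _ _ ih => exact ih.app_right _
  | mapT_arg _ i _ _ ih =>
    simp only [can, Function.apply_update (fun _ => can)]; exact .argT _ i _ ih
  | mapS_arg _ j _ _ ih =>
    simp only [can, Function.apply_update (fun _ => can)]; exact .argS _ j _ ih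
  | mapR_arg _ l _ _ ih =>
    simp only [can, Function.apply_update (fun _ => can)]; exact .argR _ l _ ih

theorem CFStep.can_rnStep {X Y : DObj m n p} {g h : DTerm Φ Ψ X Y} (s : CFStep g h) :
    RNStep (can g) (can h) := by
  obtain ⟨_, _, e₁, r, e₂⟩ := s
  rw [e₁.can_eq, ← e₂.can_eq]
  exact r.can_rnStep

theorem RNStep.notComp {X Y : DObj m n p} {t t' : DTerm Φ Ψ X Y} (s : RNStep t t')
    (h : NotComp t) : NotComp t' := by
  cases s with
  | root r => cases r <;> first | exact trivial | exact h.elim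
  | _ => first | exact trivial | exact h.elim

theorem rightNested_update {ι : Type} [DecidableEq ι] {S T : ι → DObj m n p}
    {a : ∀ k, DTerm Φ Ψ (S k) (T k)} (ha : ∀ k, RightNested (a k)) (i : ι)
    {t : DTerm Φ Ψ (S i) (T i)} (ht : RightNested t) (k : ι) :
    RightNested (Function.update a i t k) := by
  by_cases hk : k = i
  · subst hk; simpa using ht
  · simpa [hk] using ha k

theorem RNStep.rightNested {X Y : DObj m n p} {g g' : DTerm Φ Ψ X Y} (s : RNStep g g')
    (hg : RightNested g) : RightNested g' := by
  induction s with
  | root r =>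
    cases r with
    | idL => cases hg with | comp _ _ hw => exact hw
    | idR => cases hg with | comp _ ht _ => exact ht
    | merge2T =>
      cases hg with | comp _ ha hb => exact .mapT fun i => (ha.mapT_args i).dApp _ (hb.mapT_args i)
    | merge2S =>
      cases hg with | comp _ ha hb => exact .mapS fun i => (ha.mapS_args i).dApp _ (hb.mapS_args i)
    | merge2R =>
      cases hg with | comp _ ha hb => exact .mapR fun i => (ha.mapR_args i).dApp _ (hb.mapR_args i)
    | merge3T =>
      cases hg with | comp _ ha hw =>
      cases hw with | comp _ hb hw =>
      exact .comp trivial (.mapT fun i => (ha.mapT_args i).dApp _ (hb.mapT_args i)) hw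
    | merge3S =>
      cases hg with | comp _ ha hw =>
      cases hw with | comp _ hb hw =>
      exact .comp trivial (.mapS fun i => (ha.mapS_args i).dApp _ (hb.mapS_args i)) hw
    | merge3R =>
      cases hg with | comp _ ha hw =>
      cases hw with | comp _ hb hw =>
      exact .comp trivial (.mapR fun i => (ha.mapR_args i).dApp _ (hb.mapR_args i)) hw
    | collapseT | collapseS | collapseR => exact .id
  | head _ s ih => cases hg with | comp hnc ht hw => exact .comp (s.notComp hnc) (ih ht) hw
  | tail _ _ ih => cases hg with | comp hnc ht hw => exact .comp hnc ht (ih hw)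
  | argT _ i _ _ ih => cases hg with | mapT ha => exact .mapT (rightNested_update ha i (ih (ha i)))
  | argS _ j _ _ ih => cases hg with | mapS ha => exact .mapS (rightNested_update ha j (ih (ha j)))
  | argR _ l _ _ ih => cases hg with | mapR ha => exact .mapR (rightNested_update ha l (ih (ha l)))

theorem rnStar_rightNested {X Y : DObj m n p} {g g' : DTerm Φ Ψ X Y}
    (s : ReflTransGen RNStep g g') (hg : RightNested g) : RightNested g' := by
  induction s with
  | refl => exact hg
  | tail _ s ih => exact s.rightNested ih

theorem rnStar_head {X Y Z : DObj m n p} {t t' : DTerm Φ Ψ X Y} (w : DTerm Φ Ψ Y Z)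
    (s : ReflTransGen RNStep t t') : ReflTransGen RNStep (.comp t w) (.comp t' w) :=
  s.lift (fun x => DTerm.comp x w) fun _ _ => RNStep.head w

theorem rnStar_tail {X Y Z : DObj m n p} (t : DTerm Φ Ψ X Y) {w w' : DTerm Φ Ψ Y Z}
    (s : ReflTransGen RNStep w w') : ReflTransGen RNStep (.comp t w) (.comp t w') :=
  s.lift (fun x => DTerm.comp t x) fun _ _ => RNStep.tail t

theorem rnStar_mapT {X Y : Fin m → DObj m n p}
    {a b : ∀ i, DTerm Φ Ψ (dSrc (sx i) (X i) (Y i)) (dTgt (sx i) (X i) (Y i))}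
    (h : ∀ i, ReflTransGen RNStep (a i) (b i)) : ReflTransGen RNStep (.mapT a) (.mapT b) :=
  ReflTransGen.pi (F := DTerm.mapT) RNStep.argT h

theorem rnStar_mapS {X Y : Fin n → DObj m n p}
    {a b : ∀ j, DTerm Φ Ψ (dSrc (sy j) (X j) (Y j)) (dTgt (sy j) (X j) (Y j))}
    (h : ∀ j, ReflTransGen RNStep (a j) (b j)) : ReflTransGen RNStep (.mapS a) (.mapS b) :=
  ReflTransGen.pi (F := DTerm.mapS) RNStep.argS h

theorem rnStar_mapR {X Y : Fin p → DObj m n p}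
    {a b : ∀ l, DTerm Φ Ψ (dSrc (sz l) (X l) (Y l)) (dTgt (sz l) (X l) (Y l))}
    (h : ∀ l, ReflTransGen RNStep (a l) (b l)) : ReflTransGen RNStep (.mapR a) (.mapR b) :=
  ReflTransGen.pi (F := DTerm.mapR) RNStep.argR h

theorem join_app_left {X Y Z : DObj m n p} {g g' : DTerm Φ Ψ X Y} (hg : RightNested g)
    (hg' : RightNested g') (j : Join (ReflTransGen RNStep) g g') (h : DTerm Φ Ψ Y Z) :
    Join (ReflTransGen RNStep) (app g h) (app g' h) := by
  have lift : ∀ {x y : DTerm Φ Ψ X Y}, RightNested x → ReflTransGen RNStep x y →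
      ReflTransGen RNStep (app x h) (app y h) := by
    intro x y hx s
    induction s with
    | refl => exact .refl
    | tail s₁ s ih => exact ih.tail (s.app_left (rnStar_rightNested s₁ hx) h)
  obtain ⟨c, hgc, hg'c⟩ := j
  exact ⟨app c h, lift hg hgc, lift hg' hg'c⟩

theorem RNStep.dApp_left {X Y Z : DObj m n p} {b : Bool}
    {u u' : DTerm Φ Ψ (dSrc b X Y) (dTgt b X Y)} (hu : RightNested u) (s : RNStep u u')
    (h : DTerm Φ Ψ (dSrc b Y Z) (dTgt b Y Z)) : RNStep (dApp b u h) (dApp b u' h) := by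
  cases b
  · exact s.app_right h
  · exact s.app_left hu h

theorem RNStep.dApp_right {X Y Z : DObj m n p} {b : Bool}
    (u : DTerm Φ Ψ (dSrc b X Y) (dTgt b X Y)) {h h' : DTerm Φ Ψ (dSrc b Y Z) (dTgt b Y Z)}
    (hh : RightNested h) (s : RNStep h h') : RNStep (dApp b u h) (dApp b u h') := by
  cases b
  · exact s.app_left hh u
  · exact s.app_right u

theorem rnStep_dApp_dId_left {X Y : DObj m n p} (b : Bool)
    (h : DTerm Φ Ψ (dSrc b X Y) (dTgt b X Y)) : RNStep (dApp b (dId X b) h) h := by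
  cases b
  · exact RNStep.app_id h
  · exact .root (.idL h)

theorem rnStep_dApp_dId_right {X Y : DObj m n p} (b : Bool)
    (g : DTerm Φ Ψ (dSrc b X Y) (dTgt b X Y)) : RNStep (dApp b g (dId Y b)) g := by
  cases b
  · exact .root (.idL g)
  · exact RNStep.app_id g

theorem not_rnStep_id {X : DObj m n p} {v : DTerm Φ Ψ X X} : ¬ RNStep (.id X) v := by
  rintro (⟨⟨⟩⟩)

theorem not_rnStep_dId {X : DObj m n p} {b : Bool} {v : DTerm Φ Ψ (dSrc b X X) (dTgt b X X)} :
    ¬ RNStep (dId X b) v := by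
  cases b <;> exact not_rnStep_id

theorem RNContr.det {X Y : DObj m n p} {u a b : DTerm Φ Ψ X Y} (ra : RNContr u a)
    (rb : RNContr u b) : a = b := by
  cases ra <;> cases rb <;> rfl

/-! ### Critical pairs -/

section CriticalPairsT

variable {X Y Z : Fin m → DObj m n p}
  {A : ∀ i, DTerm Φ Ψ (dSrc (sx i) (X i) (Y i)) (dTgt (sx i) (X i) (Y i))}
  {B : ∀ i, DTerm Φ Ψ (dSrc (sx i) (Y i) (Z i)) (dTgt (sx i) (Y i) (Z i))}

theorem join_merge2T_head (hA : ∀ i, RightNested (A i)) {t : DTerm Φ Ψ (.T X) (.T Y)}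
    (s : RNStep (.mapT A) t) :
    Join (ReflTransGen RNStep) (.mapT fun i => dApp (sx i) (A i) (B i)) (.comp t (.mapT B)) := by
  cases s with
  | root r =>
    cases r
    exact ⟨.mapT B, rnStar_mapT fun _ => .single (rnStep_dApp_dId_left ..),
      .single (.root (.idL _))⟩
  | argT _ i u s =>
    refine ⟨.mapT fun k => dApp (sx k) (Function.update A i u k) (B k), .single ?_,
      .single (.root (.merge2T _ _))⟩
    rw [funext (Function.apply_update (fun k x => dApp (sx k) x (B k)) A i u)]
    exact .argT _ i _ (s.dApp_left (hA i) (B i))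

theorem join_merge2T_tail (hB : ∀ i, RightNested (B i)) {t : DTerm Φ Ψ (.T Y) (.T Z)}
    (s : RNStep (.mapT B) t) :
    Join (ReflTransGen RNStep) (.mapT fun i => dApp (sx i) (A i) (B i)) (.comp (.mapT A) t) := by
  cases s with
  | root r =>
    cases r
    exact ⟨.mapT A, rnStar_mapT fun _ => .single (rnStep_dApp_dId_right ..),
      .single (.root (.idR _))⟩
  | argT _ i u s =>
    refine ⟨.mapT fun k => dApp (sx k) (A k) (Function.update B i u k), .single ?_,
      .single (.root (.merge2T _ _))⟩
    rw [funext (Function.apply_update (fun k x => dApp (sx k) (A k) x) B i u)]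
    exact .argT _ i _ (s.dApp_right (A i) (hB i))

theorem join_merge2T (hA : ∀ i, RightNested (A i)) (hB : ∀ i, RightNested (B i))
    {v : DTerm Φ Ψ (.T X) (.T Z)} (s : RNStep (.comp (.mapT A) (.mapT B)) v) :
    Join (ReflTransGen RNStep) (.mapT fun i => dApp (sx i) (A i) (B i)) v := by
  cases s with
  | root r => cases r; exact ⟨_, .refl, .refl⟩
  | head _ s => exact join_merge2T_head hA s
  | tail _ s => exact join_merge2T_tail hB s

theorem join_merge3T {W : DObj m n p} (hA : ∀ i, RightNested (A i))
    (hB : ∀ i, RightNested (B i)) {w : DTerm Φ Ψ (.T Z) W} {v : DTerm Φ Ψ (.T X) W}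
    (s : RNStep (.comp (.mapT A) (.comp (.mapT B) w)) v) :
    Join (ReflTransGen RNStep) (.comp (.mapT fun i => dApp (sx i) (A i) (B i)) w) v := by
  have hAB : RightNested (.mapT fun i => dApp (sx i) (A i) (B i)) :=
    .mapT fun i => (hA i).dApp _ (hB i)
  cases s with
  | root r => cases r; exact ⟨_, .refl, .refl⟩
  | head _ s =>
    exact join_app_left hAB
      (.comp (s.notComp (by exact trivial)) (s.rightNested (.mapT hA)) (.mapT hB))
      (join_merge2T_head hA s) w
  | tail _ s =>
    cases s with
    | root r =>
      cases r with
      | idR => exact ⟨_, .single (.root (.idR _)), .single (.root (.merge2T _ _))⟩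
      | merge2T =>
        refine ⟨_, .single (.root (.merge2T _ _)), ?_⟩
        simp only [dApp_assoc]
        exact .single (.root (.merge2T _ _))
      | merge3T =>
        refine ⟨_, .single (.root (.merge3T _ _ _)), ?_⟩
        simp only [dApp_assoc]
        exact .single (.root (.merge3T _ _ _))
    | head _ s =>
      obtain ⟨c, h₁, h₂⟩ := join_app_left hAB
        (.comp (by exact trivial) (.mapT hA) (s.rightNested (.mapT hB)))
        (join_merge2T_tail hB s) w
      refine ⟨c, h₁, ?_⟩
      rw [← app_of_notComp (s.notComp (by exact trivial)) w]
      exact h₂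
    | tail _ s => exact ⟨_, .single (.tail _ s), .single (.root (.merge3T _ _ _))⟩

theorem join_mapT
    (ih : ∀ i {b c}, RNStep (A i) b → RNStep (A i) c → Join (ReflTransGen RNStep) b c)
    {b c : DTerm Φ Ψ (.T X) (.T Y)} (sb : RNStep (.mapT A) b) (sc : RNStep (.mapT A) c) :
    Join (ReflTransGen RNStep) b c := by
  cases sb with
  | root r =>
    cases sc with
    | root r' => rw [r.det r']; exact ⟨_, .refl, .refl⟩
    | argT _ _ _ s => cases r; exact absurd s not_rnStep_dId
  | argT _ _ _ s =>
    cases sc with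
    | root r => cases r; exact absurd s not_rnStep_dId
    | argT _ _ _ s' => exact join_update (F := DTerm.mapT) RNStep.argT A ih s s'

end CriticalPairsT

section CriticalPairsS

variable {X Y Z : Fin n → DObj m n p}
  {A : ∀ i, DTerm Φ Ψ (dSrc (sy i) (X i) (Y i)) (dTgt (sy i) (X i) (Y i))}
  {B : ∀ i, DTerm Φ Ψ (dSrc (sy i) (Y i) (Z i)) (dTgt (sy i) (Y i) (Z i))}

theorem join_merge2S_head (hA : ∀ i, RightNested (A i)) {t : DTerm Φ Ψ (.S X) (.S Y)}
    (s : RNStep (.mapS A) t) :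
    Join (ReflTransGen RNStep) (.mapS fun i => dApp (sy i) (A i) (B i)) (.comp t (.mapS B)) := by
  cases s with
  | root r =>
    cases r
    exact ⟨.mapS B, rnStar_mapS fun _ => .single (rnStep_dApp_dId_left ..),
      .single (.root (.idL _))⟩
  | argS _ i u s =>
    refine ⟨.mapS fun k => dApp (sy k) (Function.update A i u k) (B k), .single ?_,
      .single (.root (.merge2S _ _))⟩
    rw [funext (Function.apply_update (fun k x => dApp (sy k) x (B k)) A i u)]
    exact .argS _ i _ (s.dApp_left (hA i) (B i))

theorem join_merge2S_tail (hB : ∀ i, RightNested (B i)) {t : DTerm Φ Ψ (.S Y) (.S Z)}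
    (s : RNStep (.mapS B) t) :
    Join (ReflTransGen RNStep) (.mapS fun i => dApp (sy i) (A i) (B i)) (.comp (.mapS A) t) := by
  cases s with
  | root r =>
    cases r
    exact ⟨.mapS A, rnStar_mapS fun _ => .single (rnStep_dApp_dId_right ..),
      .single (.root (.idR _))⟩
  | argS _ i u s =>
    refine ⟨.mapS fun k => dApp (sy k) (A k) (Function.update B i u k), .single ?_,
      .single (.root (.merge2S _ _))⟩
    rw [funext (Function.apply_update (fun k x => dApp (sy k) (A k) x) B i u)]
    exact .argS _ i _ (s.dApp_right (A i) (hB i))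

theorem join_merge2S (hA : ∀ i, RightNested (A i)) (hB : ∀ i, RightNested (B i))
    {v : DTerm Φ Ψ (.S X) (.S Z)} (s : RNStep (.comp (.mapS A) (.mapS B)) v) :
    Join (ReflTransGen RNStep) (.mapS fun i => dApp (sy i) (A i) (B i)) v := by
  cases s with
  | root r => cases r; exact ⟨_, .refl, .refl⟩
  | head _ s => exact join_merge2S_head hA s
  | tail _ s => exact join_merge2S_tail hB s

theorem join_merge3S {W : DObj m n p} (hA : ∀ i, RightNested (A i))
    (hB : ∀ i, RightNested (B i)) {w : DTerm Φ Ψ (.S Z) W} {v : DTerm Φ Ψ (.S X) W}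
    (s : RNStep (.comp (.mapS A) (.comp (.mapS B) w)) v) :
    Join (ReflTransGen RNStep) (.comp (.mapS fun i => dApp (sy i) (A i) (B i)) w) v := by
  have hAB : RightNested (.mapS fun i => dApp (sy i) (A i) (B i)) :=
    .mapS fun i => (hA i).dApp _ (hB i)
  cases s with
  | root r => cases r; exact ⟨_, .refl, .refl⟩
  | head _ s =>
    exact join_app_left hAB
      (.comp (s.notComp (by exact trivial)) (s.rightNested (.mapS hA)) (.mapS hB))
      (join_merge2S_head hA s) w
  | tail _ s =>
    cases s with
    | root r =>
      cases r with
      | idR => exact ⟨_, .single (.root (.idR _)), .single (.root (.merge2S _ _))⟩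
      | merge2S =>
        refine ⟨_, .single (.root (.merge2S _ _)), ?_⟩
        simp only [dApp_assoc]
        exact .single (.root (.merge2S _ _))
      | merge3S =>
        refine ⟨_, .single (.root (.merge3S _ _ _)), ?_⟩
        simp only [dApp_assoc]
        exact .single (.root (.merge3S _ _ _))
    | head _ s =>
      obtain ⟨c, h₁, h₂⟩ := join_app_left hAB
        (.comp (by exact trivial) (.mapS hA) (s.rightNested (.mapS hB)))
        (join_merge2S_tail hB s) w
      refine ⟨c, h₁, ?_⟩
      rw [← app_of_notComp (s.notComp (by exact trivial)) w]
      exact h₂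
    | tail _ s => exact ⟨_, .single (.tail _ s), .single (.root (.merge3S _ _ _))⟩

theorem join_mapS
    (ih : ∀ i {b c}, RNStep (A i) b → RNStep (A i) c → Join (ReflTransGen RNStep) b c)
    {b c : DTerm Φ Ψ (.S X) (.S Y)} (sb : RNStep (.mapS A) b) (sc : RNStep (.mapS A) c) :
    Join (ReflTransGen RNStep) b c := by
  cases sb with
  | root r =>
    cases sc with
    | root r' => rw [r.det r']; exact ⟨_, .refl, .refl⟩
    | argS _ _ _ s => cases r; exact absurd s not_rnStep_dId
  | argS _ _ _ s =>
    cases sc with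
    | root r => cases r; exact absurd s not_rnStep_dId
    | argS _ _ _ s' => exact join_update (F := DTerm.mapS) RNStep.argS A ih s s'

end CriticalPairsS

section CriticalPairsR

variable {X Y Z : Fin p → DObj m n p}
  {A : ∀ i, DTerm Φ Ψ (dSrc (sz i) (X i) (Y i)) (dTgt (sz i) (X i) (Y i))}
  {B : ∀ i, DTerm Φ Ψ (dSrc (sz i) (Y i) (Z i)) (dTgt (sz i) (Y i) (Z i))}

theorem join_merge2R_head (hA : ∀ i, RightNested (A i)) {t : DTerm Φ Ψ (.R X) (.R Y)}
    (s : RNStep (.mapR A) t) :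
    Join (ReflTransGen RNStep) (.mapR fun i => dApp (sz i) (A i) (B i)) (.comp t (.mapR B)) := by
  cases s with
  | root r =>
    cases r
    exact ⟨.mapR B, rnStar_mapR fun _ => .single (rnStep_dApp_dId_left ..),
      .single (.root (.idL _))⟩
  | argR _ i u s =>
    refine ⟨.mapR fun k => dApp (sz k) (Function.update A i u k) (B k), .single ?_,
      .single (.root (.merge2R _ _))⟩
    rw [funext (Function.apply_update (fun k x => dApp (sz k) x (B k)) A i u)]
    exact .argR _ i _ (s.dApp_left (hA i) (B i))

theorem join_merge2R_tail (hB : ∀ i, RightNested (B i)) {t : DTerm Φ Ψ (.R Y) (.R Z)}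
    (s : RNStep (.mapR B) t) :
    Join (ReflTransGen RNStep) (.mapR fun i => dApp (sz i) (A i) (B i)) (.comp (.mapR A) t) := by
  cases s with
  | root r =>
    cases r
    exact ⟨.mapR A, rnStar_mapR fun _ => .single (rnStep_dApp_dId_right ..),
      .single (.root (.idR _))⟩
  | argR _ i u s =>
    refine ⟨.mapR fun k => dApp (sz k) (A k) (Function.update B i u k), .single ?_,
      .single (.root (.merge2R _ _))⟩
    rw [funext (Function.apply_update (fun k x => dApp (sz k) (A k) x) B i u)]
    exact .argR _ i _ (s.dApp_right (A i) (hB i))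

theorem join_merge2R (hA : ∀ i, RightNested (A i)) (hB : ∀ i, RightNested (B i))
    {v : DTerm Φ Ψ (.R X) (.R Z)} (s : RNStep (.comp (.mapR A) (.mapR B)) v) :
    Join (ReflTransGen RNStep) (.mapR fun i => dApp (sz i) (A i) (B i)) v := by
  cases s with
  | root r => cases r; exact ⟨_, .refl, .refl⟩
  | head _ s => exact join_merge2R_head hA s
  | tail _ s => exact join_merge2R_tail hB s

theorem join_merge3R {W : DObj m n p} (hA : ∀ i, RightNested (A i))
    (hB : ∀ i, RightNested (B i)) {w : DTerm Φ Ψ (.R Z) W} {v : DTerm Φ Ψ (.R X) W}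
    (s : RNStep (.comp (.mapR A) (.comp (.mapR B) w)) v) :
    Join (ReflTransGen RNStep) (.comp (.mapR fun i => dApp (sz i) (A i) (B i)) w) v := by
  have hAB : RightNested (.mapR fun i => dApp (sz i) (A i) (B i)) :=
    .mapR fun i => (hA i).dApp _ (hB i)
  cases s with
  | root r => cases r; exact ⟨_, .refl, .refl⟩
  | head _ s =>
    exact join_app_left hAB
      (.comp (s.notComp (by exact trivial)) (s.rightNested (.mapR hA)) (.mapR hB))
      (join_merge2R_head hA s) w
  | tail _ s =>
    cases s with
    | root r =>
      cases r with
      | idR => exact ⟨_, .single (.root (.idR _)), .single (.root (.merge2R _ _))⟩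
      | merge2R =>
        refine ⟨_, .single (.root (.merge2R _ _)), ?_⟩
        simp only [dApp_assoc]
        exact .single (.root (.merge2R _ _))
      | merge3R =>
        refine ⟨_, .single (.root (.merge3R _ _ _)), ?_⟩
        simp only [dApp_assoc]
        exact .single (.root (.merge3R _ _ _))
    | head _ s =>
      obtain ⟨c, h₁, h₂⟩ := join_app_left hAB
        (.comp (by exact trivial) (.mapR hA) (s.rightNested (.mapR hB)))
        (join_merge2R_tail hB s) w
      refine ⟨c, h₁, ?_⟩
      rw [← app_of_notComp (s.notComp (by exact trivial)) w]
      exact h₂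
    | tail _ s => exact ⟨_, .single (.tail _ s), .single (.root (.merge3R _ _ _))⟩

theorem join_mapR
    (ih : ∀ i {b c}, RNStep (A i) b → RNStep (A i) c → Join (ReflTransGen RNStep) b c)
    {b c : DTerm Φ Ψ (.R X) (.R Y)} (sb : RNStep (.mapR A) b) (sc : RNStep (.mapR A) c) :
    Join (ReflTransGen RNStep) b c := by
  cases sb with
  | root r =>
    cases sc with
    | root r' => rw [r.det r']; exact ⟨_, .refl, .refl⟩
    | argR _ _ _ s => cases r; exact absurd s not_rnStep_dId
  | argR _ _ _ s =>
    cases sc with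
    | root r => cases r; exact absurd s not_rnStep_dId
    | argR _ _ _ s' => exact join_update (F := DTerm.mapR) RNStep.argR A ih s s'

end CriticalPairsR

theorem RNContr.join_rnStep {X Y : DObj m n p} {u a b : DTerm Φ Ψ X Y} (hu : RightNested u)
    (r : RNContr u a) (s : RNStep u b) : Join (ReflTransGen RNStep) a b := by
  cases r with
  | idL =>
    cases s with
    | root r' => rw [(RNContr.idL _).det r']; exact ⟨_, .refl, .refl⟩
    | head _ s => exact absurd s not_rnStep_id
    | tail _ s => exact ⟨_, .single s, .single (.root (.idL _))⟩
  | idR =>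
    cases s with
    | root r' => rw [(RNContr.idR _).det r']; exact ⟨_, .refl, .refl⟩
    | head _ s => exact ⟨_, .single s, .single (.root (.idR _))⟩
    | tail _ s => exact absurd s not_rnStep_id
  | merge2T =>
    cases hu with | comp _ hA hB => exact join_merge2T hA.mapT_args hB.mapT_args s
  | merge2S =>
    cases hu with | comp _ hA hB => exact join_merge2S hA.mapS_args hB.mapS_args s
  | merge2R =>
    cases hu with | comp _ hA hB => exact join_merge2R hA.mapR_args hB.mapR_args s
  | merge3T =>
    cases hu with | comp _ hA hw => cases hw with | comp _ hB _ =>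
    exact join_merge3T hA.mapT_args hB.mapT_args s
  | merge3S =>
    cases hu with | comp _ hA hw => cases hw with | comp _ hB _ =>
    exact join_merge3S hA.mapS_args hB.mapS_args s
  | merge3R =>
    cases hu with | comp _ hA hw => cases hw with | comp _ hB _ =>
    exact join_merge3R hA.mapR_args hB.mapR_args s
  | collapseT =>
    exact join_mapT (fun _ _ _ s => absurd s not_rnStep_dId) (.root (.collapseT _)) s
  | collapseS =>
    exact join_mapS (fun _ _ _ s => absurd s not_rnStep_dId) (.root (.collapseS _)) s
  | collapseR =>
    exact join_mapR (fun _ _ _ s => absurd s not_rnStep_dId) (.root (.collapseR _)) s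

theorem RNStep.join_of_rightNested {X Y : DObj m n p} {u a b : DTerm Φ Ψ X Y}
    (hu : RightNested u) (sa : RNStep u a) (sb : RNStep u b) : Join (ReflTransGen RNStep) a b := by
  induction hu with
  | f | id | alpha | beta => cases sa with | root r => cases r
  | mapT _ ih => exact join_mapT ih sa sb
  | mapS _ ih => exact join_mapS ih sa sb
  | mapR _ ih => exact join_mapR ih sa sb
  | comp hnc ht hw iht ihw =>
    have hu := RightNested.comp hnc ht hw
    cases sa with
    | root r => exact r.join_rnStep hu sb
    | head _ sa =>
      cases sb with
      | root r => exact Std.Symm.symm _ _ (r.join_rnStep hu (.head _ sa))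
      | head _ sb =>
        obtain ⟨c, h₁, h₂⟩ := iht sa sb
        exact ⟨_, rnStar_head _ h₁, rnStar_head _ h₂⟩
      | tail _ sb => exact ⟨_, .single (.tail _ sb), .single (.head _ sa)⟩
    | tail _ sa =>
      cases sb with
      | root r => exact Std.Symm.symm _ _ (r.join_rnStep hu (.tail _ sa))
      | head _ sb => exact ⟨_, .single (.head _ sb), .single (.tail _ sa)⟩
      | tail _ sb =>
        obtain ⟨c, h₁, h₂⟩ := ihw sa sb
        exact ⟨_, rnStar_tail _ h₁, rnStar_tail _ h₂⟩

/-! ### Confluence and normal forms -/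

theorem wellFounded_flip_rnStep {X Y : DObj m n p} :
    WellFounded (flip (RNStep (Φ := Φ) (Ψ := Ψ) (X := X) (Y := Y))) :=
  (InvImage.wf wt wellFounded_lt).mono fun _ _ s => s.toCFStep.wt_lt

theorem rnStar_join_of_rightNested {X Y : DObj m n p} {u a b : DTerm Φ Ψ X Y}
    (hu : RightNested u) (ha : ReflTransGen RNStep u a) (hb : ReflTransGen RNStep u b) :
    Join (ReflTransGen RNStep) a b :=
  newman RightNested (fun h s => s.rightNested h) wellFounded_flip_rnStep
    (fun h sa sb => sa.join_of_rightNested h sb) hu ha hb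

theorem cfStar_of_rnStar {X Y : DObj m n p} {g h : DTerm Φ Ψ X Y}
    (s : ReflTransGen RNStep g h) : ReflTransGen CFStep g h :=
  ReflTransGen.mono (fun _ _ => RNStep.toCFStep) _ _ s

theorem rnStar_can_of_cfStar {X Y : DObj m n p} {g h : DTerm Φ Ψ X Y}
    (s : ReflTransGen CFStep g h) : ReflTransGen RNStep (can g) (can h) :=
  s.lift can fun _ _ => CFStep.can_rnStep

theorem exists_cfStar_aeq_of_aeq {X Y : DObj m n p} {g u v : DTerm Φ Ψ X Y} (e : AEq g u)
    (s : ReflTransGen CFStep u v) : ∃ v', ReflTransGen CFStep g v' ∧ AEq v' v := by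
  rcases s.cases_head with rfl | ⟨w, s₁, s'⟩
  · exact ⟨g, .refl, e⟩
  · exact ⟨v, .head (s₁.of_aeq e) s', .refl v⟩

theorem CFStep.wcr {X Y : DObj m n p} {g a b : DTerm Φ Ψ X Y} (sa : CFStep g a)
    (sb : CFStep g b) :
    ∃ a' b', ReflTransGen CFStep a a' ∧ ReflTransGen CFStep b b' ∧ AEq a' b' := by
  obtain ⟨c, hac, hbc⟩ := sa.can_rnStep.join_of_rightNested (rightNested_can g) sb.can_rnStep
  obtain ⟨a', haa', ha'c⟩ := exists_cfStar_aeq_of_aeq (aeq_can a) (cfStar_of_rnStar hac)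
  obtain ⟨b', hbb', hb'c⟩ := exists_cfStar_aeq_of_aeq (aeq_can b) (cfStar_of_rnStar hbc)
  exact ⟨a', b', haa', hbb', ha'c.trans hb'c.symm⟩

theorem exists_cfNormal {X Y : DObj m n p} (g : DTerm Φ Ψ X Y) :
    ∃ nf, ReflTransGen CFStep g nf ∧ CFNormal nf := by
  obtain ⟨nf, hnf, hmin⟩ :=
    wellFounded_flip_cfStep.has_min {h | ReflTransGen CFStep g h} ⟨g, .refl⟩
  exact ⟨nf, hnf, fun ⟨h, s⟩ => hmin h (ReflTransGen.tail hnf s) s⟩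

theorem CFNormal.can_eq_of_rnStar {X Y : DObj m n p} {g v : DTerm Φ Ψ X Y} (hg : CFNormal g)
    (s : ReflTransGen RNStep (can g) v) : can g = v := by
  rcases s.cases_head with rfl | ⟨w, s₁, -⟩
  · rfl
  · exact absurd ⟨w, s₁.toCFStep.of_aeq (aeq_can g)⟩ hg

theorem CFNormal.aeq {X Y : DObj m n p} {g nf₁ nf₂ : DTerm Φ Ψ X Y}
    (r₁ : ReflTransGen CFStep g nf₁) (r₂ : ReflTransGen CFStep g nf₂)
    (h₁ : CFNormal nf₁) (h₂ : CFNormal nf₂) : AEq nf₁ nf₂ := by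
  obtain ⟨c, hc₁, hc₂⟩ := rnStar_join_of_rightNested (rightNested_can g)
    (rnStar_can_of_cfStar r₁) (rnStar_can_of_cfStar r₂)
  exact aeq_iff_can_eq.2 ((h₁.can_eq_of_rnStar hc₁).trans (h₂.can_eq_of_rnStar hc₂).symm)

end

/-- Lemma 2.5 of the paper.  The `CF` reduction relation on
morphism terms of `𝒟` (taken up to associativity of composition) is strongly
normalizing and weakly Church–Rosser; consequently every morphism term `g` has a
`CF` normal form, which is unique (up to associativity of composition). -/
theorem cf_SN_WCR_uniqueNF
    {m n p gΦ gΨ : ℕ} {sx : Fin m → Bool} {sy : Fin n → Bool} {sz : Fin p → Bool}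
    {Φ : GGraph m n gΦ sx sy} {Ψ : GGraph n p gΨ sy sz} :
    -- strong normalization
    (∀ {X Y : DObj m n p} (seq : ℕ → DTerm Φ Ψ X Y),
        ¬ ∀ t, CFStep (seq t) (seq (t + 1))) ∧
    -- weak Church–Rosser
    (∀ {X Y : DObj m n p} (g a b : DTerm Φ Ψ X Y), CFStep g a → CFStep g b →
        ∃ a' b', Relation.ReflTransGen CFStep a a' ∧
          Relation.ReflTransGen CFStep b b' ∧ AEq a' b') ∧
    -- existence of normal forms
    (∀ {X Y : DObj m n p} (g : DTerm Φ Ψ X Y),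
        ∃ nf, Relation.ReflTransGen CFStep g nf ∧ CFNormal nf) ∧
    -- uniqueness of normal forms
    (∀ {X Y : DObj m n p} (g nf₁ nf₂ : DTerm Φ Ψ X Y),
        Relation.ReflTransGen CFStep g nf₁ → Relation.ReflTransGen CFStep g nf₂ →
        CFNormal nf₁ → CFNormal nf₂ → AEq nf₁ nf₂) := by
  refine ⟨fun seq h => ?_, fun _ _ _ sa sb => sa.wcr sb, exists_cfNormal,
    fun _ _ _ r₁ r₂ h₁ h₂ => CFNormal.aeq r₁ r₂ h₁ h₂⟩
  exact (wellFounded_iff_isEmpty_descending_chain.1 wellFounded_flip_cfStep).false ⟨seq, h⟩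

end GDin
end

section
/- If there are no alternating loops in the single-component amalgamation Φ+Ψ, then Φ+Ψ provides g-dinaturality (i.e., P(Φ,Ψ) holds). -/
open CategoryTheory

universe u v

namespace GDin

variable {B : Type u} [Category.{v} B]

variable {ι : Type} {k : ℕ}

section Amalg

variable {m n p gΦ gΨ : ℕ} {sx : Fin m → Bool} {sy : Fin n → Bool} {sz : Fin p → Bool}

/-- Vertices of the amalgamation `Φ+Ψ` of two graphs sharing their `y` argument
places. -/
abbrev AVtx (m n p gΦ gΨ : ℕ) := (Fin m ⊕ Fin n ⊕ Fin p) ⊕ (Fin gΦ ⊕ Fin gΨ)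

/-- inclusion of the vertices of `Φ` into the amalgamation -/
def phiInc : Vtx m n gΦ → AVtx m n p gΦ gΨ
  | .inl (.inl i) => .inl (.inl i)
  | .inl (.inr j) => .inl (.inr (.inl j))
  | .inr a => .inr (.inl a)

/-- inclusion of the vertices of `Ψ` into the amalgamation -/
def psiInc : Vtx n p gΨ → AVtx m n p gΦ gΨ
  | .inl (.inl j) => .inl (.inr (.inl j))
  | .inl (.inr l) => .inl (.inr (.inr l))
  | .inr a => .inr (.inr a)

/-- The edges of the amalgamation `Φ+Ψ`, tagged (`true` for `Φ`-edges, `false` for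
`Ψ`-edges); the edge sets are kept disjoint via the tag. -/
def amEdge (Φ : GGraph m n gΦ sx sy) (Ψ : GGraph n p gΨ sy sz) :
    Bool → AVtx m n p gΦ gΨ → AVtx m n p gΦ gΨ → Prop
  | true, u, v => ∃ u' v', Φ.edge u' v' ∧ phiInc u' = u ∧ phiInc v' = v
  | false, u, v => ∃ u' v', Ψ.edge u' v' ∧ psiInc u' = u ∧ psiInc v' = v

/-- `Φ+Ψ` has a single (connected) component. -/
def AmalgConnected (Φ : GGraph m n gΦ sx sy) (Ψ : GGraph n p gΨ sy sz) : Prop :=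
  ∀ u v : AVtx m n p gΦ gΨ,
    Conn (fun a b => amEdge Φ Ψ true a b ∨ amEdge Φ Ψ false a b) u v

/-- There is an alternating loop in `Φ+Ψ`: a closed alternating chain, i.e. a cyclic
sequence of vertices joined by edges of `Φ+Ψ` such that of any two adjacent edges one
belongs to `E_Φ` and the other to `E_Ψ`. -/
def HasAltLoop (Φ : GGraph m n gΦ sx sy) (Ψ : GGraph n p gΨ sy sz) : Prop :=
  ∃ (q : ℕ) (vs : ℕ → AVtx m n p gΦ gΨ) (sd : ℕ → Bool),
    0 < q ∧ vs 0 = vs q ∧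
    (∀ t, t < q → amEdge Φ Ψ (sd t) (vs t) (vs (t + 1))) ∧
    (∀ t, t + 1 < q → sd t ≠ sd (t + 1))

/-- `Φ+Ψ` provides g-dinaturality: for every category, all functors of the types
prescribed by the signs of the argument places and all g-dinatural `γ`, `δ` with
graphs `Φ`, `Ψ`, the composite family is g-dinatural with the (single-component)
composite graph `ΨΦ`, i.e. the composite hexagon commutes.  (For a
single-component graph, g-dinaturality depends only on the signs of the argument
places.) -/
def Provides (Φ : GGraph m n gΦ sx sy) (Ψ : GGraph n p gΨ sy sz) : Prop :=
  ∀ {B : Type u} [Category.{v} B]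
    (F : (∀ i : Fin m, VarCat B (sx i)) ⥤ B)
    (G : (∀ j : Fin n, VarCat B (sy j)) ⥤ B)
    (H : (∀ l : Fin p, VarCat B (sz l)) ⥤ B)
    (γ : ∀ A : Fin Φ.k → B, F.obj (diagObj sx Φ.πL A) ⟶ G.obj (diagObj sy Φ.πR A))
    (δ : ∀ A : Fin Ψ.k → B, G.obj (diagObj sy Ψ.πL A) ⟶ H.obj (diagObj sz Ψ.πR A)),
    IsGDin Φ F G γ → IsGDin Ψ G H δ →
    SingleHex sx sz F H (fun A => γ (fun _ => A) ≫ δ (fun _ => A))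

end Amalg

/-!
Fix `f : P ⟶ Q`. A state assigns `Q` (`true`) or `P` (`false`) to every component of `Φ` and of
`Ψ`. At a place `y_j` the argument of `G` has to be carried from the value of its `Φ`-component
to that of its `Ψ`-component, which `f` allows only upwards (from `P` to `Q`) at a positive and
only downwards at a negative place. So the admissible states are the upper sets of the relation
`Prec`, which orders the two components of each `y_j` according to its sign. For such a state
`σ`, `theta σ : F⟨P,Q⟩ ⟶ H⟨Q,P⟩` composes `γ` and `δ` at the objects chosen by `σ` with the
induced maps; at the all-`Q` and the all-`P` state it is the left and the right side of the
composite hexagon.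

Switching one component from `Q` to `P` leaves `theta` unchanged, by the g-dinaturality of `γ`
or `δ` in that component. A cycle of `Prec` passes through places `y_j`, consecutive ones sharing
a component, alternately of `Φ` and of `Ψ`: it is an alternating loop. Hence `Prec` is acyclic,
and every admissible state can be lowered to the all-`P` state by switching one `Prec`-minimal
component at a time.
-/

section Descent

open Relation

theorem _root_.Relation.TransGen.exists_chain {α : Type*} {r : α → α → Prop} {a b : α}
    (h : TransGen r a b) :
    ∃ k, 0 < k ∧ ∃ us : ℕ → α, us 0 = a ∧ us k = b ∧ ∀ t < k, r (us t) (us (t + 1)) := by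
  induction h with
  | @single b hab => exact ⟨1, one_pos, fun t => if t = 0 then a else b, rfl, rfl, by simpa⟩
  | @tail _ c _ hbc ih =>
    obtain ⟨k, hk, us, h0, hk', hr⟩ := ih
    refine ⟨k + 1, k.succ_pos, fun t => if t ≤ k then us t else c, by simpa, by simp, ?_⟩
    intro t ht
    rcases Nat.lt_or_ge t k with htk | htk
    · simpa [htk.le, Nat.succ_le_of_lt htk] using hr t htk
    · obtain rfl : t = k := by omega
      simpa [hk'] using hbc

theorem _root_.Relation.TransGen.exists_periodic_chain {α : Type*} {r : α → α → Prop} {a : α}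
    (h : TransGen r a a) :
    ∃ k, 0 < k ∧ ∃ us : ℕ → α, Function.Periodic us k ∧ ∀ t, r (us t) (us (t + 1)) := by
  obtain ⟨k, hk, us, h0, hk', hr⟩ := h.exists_chain
  refine ⟨k, hk, fun t => us (t % k), fun t => by simp, fun t => ?_⟩
  have hstep := hr (t % k) (Nat.mod_lt t hk)
  dsimp only
  rw [← Nat.mod_add_mod]
  rcases Nat.lt_or_eq_of_le (Nat.mod_lt t hk) with hlt | hend
  · rwa [Nat.mod_eq_of_lt hlt]
  · have hend : t % k + 1 = k := hend
    rw [hend] at hstep ⊢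
    rwa [Nat.mod_self, h0, ← hk']

variable {α : Type*} [DecidableEq α] {r : α → α → Prop}

theorem update_false_le_of_minimal {σ : α → Bool} (hσ : ∀ a b, r a b → σ a ≤ σ b) {a : α}
    (ha : ∀ b, r b a → σ b = false) :
    ∀ b c, r b c → Function.update σ a false b ≤ Function.update σ a false c := by
  intro b c hbc
  rcases eq_or_ne b a with rfl | hb
  · simp
  rcases eq_or_ne c a with rfl | hc
  · simp [hb, ha b hbc]
  · simpa [hb, hc] using hσ b c hbc

theorem card_update_false_lt [Fintype α] {σ : α → Bool} {a : α} (ha : σ a = true) :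
    (Finset.univ.filter (Function.update σ a false · = true)).card <
      (Finset.univ.filter (σ · = true)).card := by
  refine Finset.card_lt_card ((Finset.ssubset_iff_of_subset fun b => ?_).2 ⟨a, by simpa, by simp⟩)
  rcases eq_or_ne b a with rfl | hb <;> simp_all

theorem eq_at_false_of_update_invariant {X : Type*} [Finite α]
    (hr : ∀ a, ¬ TransGen r a a) (Θ : (σ : α → Bool) → (∀ a b, r a b → σ a ≤ σ b) → X)
    (hΘ : ∀ σ hσ a hσ', σ a = true → Θ σ hσ = Θ (Function.update σ a false) hσ')
    (σ : α → Bool) (hσ : ∀ a b, r a b → σ a ≤ σ b) :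
    Θ σ hσ = Θ (fun _ => false) (fun _ _ _ => le_rfl) := by
  have := Fintype.ofFinite α
  have : IsTrans α (TransGen r) := ⟨fun _ _ _ => TransGen.trans⟩
  have : Std.Irrefl (TransGen r) := ⟨hr⟩
  have wf := Finite.wellFounded_of_trans_of_irrefl (TransGen r)
  induction hN : (Finset.univ.filter (σ · = true)).card using Nat.strong_induction_on
    generalizing σ with
  | _ N ih =>
  by_cases hne : ∃ a, σ a = true
  · obtain ⟨a, ha, hmin⟩ := wf.has_min {a | σ a = true} hne
    have hσ' := update_false_le_of_minimal hσ fun b hb =>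
      Bool.eq_false_iff.2 fun hb' => hmin b hb' (.single hb)
    rw [hΘ σ hσ a hσ' ha]
    exact ih _ (hN ▸ card_update_false_lt ha) _ hσ' rfl
  · push Not at hne
    obtain rfl : σ = fun _ => false := funext (by simpa using hne)
    rfl

end Descent

section Hexagon

theorem hexHom_heq_of_eq (s : ι → Bool) (pl : ι → Fin k) (c : Fin k) (A : Fin k → B)
    {P P' N N' : B} (u : P ⟶ P') (v : N' ⟶ N) {i : ι} (h : pl i = c) :
    hexHom s pl c A u v i ≍ pairHom (s i) u v := by
  unfold hexHom
  rw [dif_pos h]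
  exact cast_heq _ _

theorem hexHom_eq_eqToHom_of_ne (s : ι → Bool) (pl : ι → Fin k) (c : Fin k) (A : Fin k → B)
    {P P' N N' : B} (u : P ⟶ P') (v : N' ⟶ N) {i : ι} (h : pl i ≠ c) :
    hexHom s pl c A u v i = eqToHom (by simp [hexObj, h]) := by
  have hid : hexHom s pl c A u v i ≍ 𝟙 (pairObj (s i) (A (pl i)) (A (pl i))) := by
    unfold hexHom
    rw [dif_neg h]
    exact (cast_heq _ _).trans (by congr 1)
  rw [(conj_eqToHom_iff_heq' _ _ (by simp [hexObj, h]) (by simp [hexObj, h])).2 hid]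
  simp

variable {P Q : B}

def IsLeftFlip (s : ι → Bool) (pl : ι → Fin k) (c : Fin k) (f : P ⟶ Q)
    {X Y Y' : ∀ i, VarCat B (s i)} (L : X ⟶ Y) (L' : X ⟶ Y') : Prop :=
  ∀ i, (pl i = c → X i = pairObj (s i) P Q ∧
      L i ≍ pairHom (s i) f (𝟙 Q) ∧ L' i ≍ pairHom (s i) (𝟙 P) f) ∧
    (pl i ≠ c → L i ≍ L' i)

def IsRightFlip (s : ι → Bool) (pl : ι → Fin k) (c : Fin k) (f : P ⟶ Q)
    {X X' Y : ∀ i, VarCat B (s i)} (R : X ⟶ Y) (R' : X' ⟶ Y) : Prop :=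
  ∀ i, (pl i = c → Y i = pairObj (s i) Q P ∧
      R i ≍ pairHom (s i) (𝟙 Q) f ∧ R' i ≍ pairHom (s i) f (𝟙 P)) ∧
    (pl i ≠ c → R i ≍ R' i)

theorem IsLeftFlip.exists_factor {s : ι → Bool} {pl : ι → Fin k} {c : Fin k} {A : Fin k → B}
    {f : P ⟶ Q} {X : ∀ i, VarCat B (s i)} {L : X ⟶ diagObj s pl (updF A c Q)}
    {L' : X ⟶ diagObj s pl (updF A c P)} (hL : IsLeftFlip s pl c f L L') :
    ∃ x : X ⟶ hexObj s pl c A P Q,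
      L = x ≫ hexHom s pl c A f (𝟙 Q) ≫ eqToHom (diag_upd s pl c A Q).symm ∧
      L' = x ≫ hexHom s pl c A (𝟙 P) f ≫ eqToHom (diag_upd s pl c A P).symm := by
  refine ⟨fun i => if h : pl i = c then eqToHom (by simp [hexObj, h, ((hL i).1 h).1])
    else L i ≫ eqToHom (by simp [hexObj, diagObj, updF, h]), ?_, ?_⟩ <;> funext i <;>
    simp only [Pi.comp_apply, Functor.eqToHom_proj] <;> by_cases h : pl i = c
  · rw [dif_pos h, conj_eqToHom_iff_heq']
    exact ((hL i).1 h).2.1.trans (hexHom_heq_of_eq _ _ _ _ _ _ h).symm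
  · rw [dif_neg h, hexHom_eq_eqToHom_of_ne _ _ _ _ _ _ h]
    simp
  · rw [dif_pos h, conj_eqToHom_iff_heq']
    exact ((hL i).1 h).2.2.trans (hexHom_heq_of_eq _ _ _ _ _ _ h).symm
  · rw [dif_neg h, hexHom_eq_eqToHom_of_ne _ _ _ _ _ _ h]
    simp only [Category.assoc, eqToHom_trans]
    exact eq_of_heq (((hL i).2 h).symm.trans ((comp_eqToHom_heq_iff _ _ _).2 HEq.rfl).symm)

theorem IsRightFlip.exists_factor {s : ι → Bool} {pl : ι → Fin k} {c : Fin k} {A : Fin k → B}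
    {f : P ⟶ Q} {Y : ∀ i, VarCat B (s i)} {R : diagObj s pl (updF A c Q) ⟶ Y}
    {R' : diagObj s pl (updF A c P) ⟶ Y} (hR : IsRightFlip s pl c f R R') :
    ∃ y : hexObj s pl c A Q P ⟶ Y,
      R = eqToHom (diag_upd s pl c A Q) ≫ hexHom s pl c A (𝟙 Q) f ≫ y ∧
      R' = eqToHom (diag_upd s pl c A P) ≫ hexHom s pl c A f (𝟙 P) ≫ y := by
  refine ⟨fun i => if h : pl i = c then eqToHom (by simp [hexObj, h, ((hR i).1 h).1])
    else eqToHom (by simp [hexObj, diagObj, updF, h]) ≫ R i, ?_, ?_⟩ <;> funext i <;>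
    simp only [Pi.comp_apply, Functor.eqToHom_proj] <;> by_cases h : pl i = c
  · rw [dif_pos h, conj_eqToHom_iff_heq']
    exact ((hR i).1 h).2.1.trans (hexHom_heq_of_eq _ _ _ _ _ _ h).symm
  · rw [dif_neg h, hexHom_eq_eqToHom_of_ne _ _ _ _ _ _ h]
    simp
  · rw [dif_pos h, conj_eqToHom_iff_heq']
    exact ((hR i).1 h).2.2.trans (hexHom_heq_of_eq _ _ _ _ _ _ h).symm
  · rw [dif_neg h, hexHom_eq_eqToHom_of_ne _ _ _ _ _ _ h]
    simp only [eqToHom_trans_assoc]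
    exact eq_of_heq (((hR i).2 h).symm.trans ((eqToHom_comp_heq_iff _ _ _).2 HEq.rfl).symm)

theorem IsGDin.flip {m n g : ℕ} {sL : Fin m → Bool} {sR : Fin n → Bool}
    {Γ : GGraph m n g sL sR} {T : (∀ i : Fin m, VarCat B (sL i)) ⥤ B}
    {S : (∀ j : Fin n, VarCat B (sR j)) ⥤ B}
    {α : ∀ A : Fin Γ.k → B, T.obj (diagObj sL Γ.πL A) ⟶ S.obj (diagObj sR Γ.πR A)}
    (hα : IsGDin Γ T S α) (f : P ⟶ Q) (c : Fin Γ.k) {A A₁ A₂ : Fin Γ.k → B}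
    (h₁ : updF A c Q = A₁) (h₂ : updF A c P = A₂) {X : ∀ i, VarCat B (sL i)}
    {Y : ∀ j, VarCat B (sR j)} {L : X ⟶ diagObj sL Γ.πL A₁} {L' : X ⟶ diagObj sL Γ.πL A₂}
    {R : diagObj sR Γ.πR A₁ ⟶ Y} {R' : diagObj sR Γ.πR A₂ ⟶ Y}
    (hL : IsLeftFlip sL Γ.πL c f L L') (hR : IsRightFlip sR Γ.πR c f R R') :
    T.map L ≫ α A₁ ≫ S.map R = T.map L' ≫ α A₂ ≫ S.map R' := by
  subst h₁ h₂
  obtain ⟨x, rfl, rfl⟩ := hL.exists_factor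
  obtain ⟨y, rfl, rfl⟩ := hR.exists_factor
  simp only [Functor.map_comp, eqToHom_map, Category.assoc]
  rw [reassoc_of% hα c A P Q f]

end Hexagon

section States

variable {P Q : B} (f : P ⟶ Q)

def condHom : (a b : Bool) → a ≤ b → (cond a Q P ⟶ cond b Q P)
  | false, false, _ => 𝟙 P
  | false, true, _ => f
  | true, true, _ => 𝟙 Q
  | true, false, h => absurd h (by decide)

def leftHom (s b : Bool) : pairObj s P Q ⟶ pairObj s (cond b Q P) (cond b Q P) :=
  pairHom s (condHom f false b (Bool.false_le b)) (condHom f b true (Bool.le_true b))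

def rightHom (s b : Bool) : pairObj s (cond b Q P) (cond b Q P) ⟶ pairObj s Q P :=
  pairHom s (condHom f b true (Bool.le_true b)) (condHom f false b (Bool.false_le b))

def midHom : (s a b : Bool) → cond s (a ≤ b) (b ≤ a) →
    (pairObj s (cond a Q P) (cond a Q P) ⟶ pairObj s (cond b Q P) (cond b Q P))
  | true, a, b, h => condHom f a b h
  | false, a, b, h => (condHom f b a h).op

theorem leftHom_congr (s : Bool) {a b : Bool} (h : a = b) : leftHom f s a ≍ leftHom f s b := by
  subst h
  rfl

theorem rightHom_congr (s : Bool) {a b : Bool} (h : a = b) :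
    rightHom f s a ≍ rightHom f s b := by
  subst h
  rfl

theorem midHom_congr {s a a' b b' : Bool} (h h') (ha : a = a') (hb : b = b') :
    midHom f s a b h ≍ midHom f s a' b' h' := by
  subst ha hb
  rfl

theorem midHom_self (s a : Bool) (h) : midHom f s a a h = 𝟙 _ := by
  cases s <;> cases a <;> rfl

theorem midHom_heq_of_true_self {s a b : Bool} (h) (ha : a = true) (hb : b = s) :
    midHom f s a b h ≍ pairHom s (𝟙 Q) f := by
  subst ha
  cases s <;> subst hb <;> rfl

theorem midHom_heq_of_false_self {s a b : Bool} (h) (ha : a = false) (hb : b = s) :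
    midHom f s a b h ≍ pairHom s f (𝟙 P) := by
  subst ha
  cases s <;> subst hb <;> rfl

theorem midHom_heq_of_not_true {s a b : Bool} (h) (ha : a = !s) (hb : b = true) :
    midHom f s a b h ≍ pairHom s f (𝟙 Q) := by
  subst ha hb
  cases s <;> rfl

theorem midHom_heq_of_not_false {s a b : Bool} (h) (ha : a = !s) (hb : b = false) :
    midHom f s a b h ≍ pairHom s (𝟙 P) f := by
  subst ha hb
  cases s <;> rfl

theorem pairObj_cond_of_eq (P Q : B) {s b : Bool} (hb : b = s) :
    pairObj s (cond b Q P) (cond b Q P) = pairObj s Q P := by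
  subst hb
  cases b <;> rfl

theorem pairObj_cond_of_eq_not (P Q : B) {s b : Bool} (hb : b = !s) :
    pairObj s (cond b Q P) (cond b Q P) = pairObj s P Q := by
  subst hb
  cases s <;> rfl

theorem updF_cond_of_true {γ : Type*} (σ : Fin k → Bool) {c : Fin k} (hc : σ c = true)
    (x y : γ) : updF (fun c' => cond (σ c') y x) c y = fun c' => cond (σ c') y x := by
  funext c'
  by_cases h : c' = c <;> simp [updF, h, hc]

theorem updF_cond {γ : Type*} (σ : Fin k → Bool) (c : Fin k) (x y : γ) :
    updF (fun c' => cond (σ c') y x) c x = fun c' => cond (Function.update σ c false c') y x := by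
  funext c'
  by_cases h : c' = c <;> simp [updF, h]

end States

section Tuples

variable {P Q : B} (f : P ⟶ Q)

def leftTup (s : ι → Bool) (pl : ι → Fin k) (σ : Fin k → Bool) :
    tupObj s P Q ⟶ diagObj s pl (fun c => cond (σ c) Q P) :=
  fun i => leftHom f (s i) (σ (pl i))

def rightTup (s : ι → Bool) (pl : ι → Fin k) (σ : Fin k → Bool) :
    diagObj s pl (fun c => cond (σ c) Q P) ⟶ tupObj s Q P :=
  fun i => rightHom f (s i) (σ (pl i))

def midTup {k' : ℕ} (s : ι → Bool) (pl : ι → Fin k) (pr : ι → Fin k') (σ : Fin k → Bool)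
    (σ' : Fin k' → Bool) (h : ∀ i, cond (s i) (σ (pl i) ≤ σ' (pr i)) (σ' (pr i) ≤ σ (pl i))) :
    diagObj s pl (fun c => cond (σ c) Q P) ⟶ diagObj s pr (fun c => cond (σ' c) Q P) :=
  fun i => midHom f (s i) (σ (pl i)) (σ' (pr i)) (h i)

variable (s : ι → Bool) (pl : ι → Fin k) {σ : Fin k → Bool} {c : Fin k}

theorem isLeftFlip_leftTup (hc : σ c = true) :
    IsLeftFlip s pl c f (leftTup f s pl σ) (leftTup f s pl (Function.update σ c false)) := by
  intro i
  dsimp only [leftTup]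
  refine ⟨fun h => ⟨rfl, leftHom_congr f _ (show σ (pl i) = true by rw [h, hc]),
    leftHom_congr f _ (show Function.update σ c false (pl i) = false by simp [h])⟩,
    fun h => leftHom_congr f _ (Function.update_of_ne h _ σ).symm⟩

theorem isRightFlip_rightTup (hc : σ c = true) :
    IsRightFlip s pl c f (rightTup f s pl σ) (rightTup f s pl (Function.update σ c false)) := by
  intro i
  dsimp only [rightTup]
  refine ⟨fun h => ⟨rfl, rightHom_congr f _ (show σ (pl i) = true by rw [h, hc]),
    rightHom_congr f _ (show Function.update σ c false (pl i) = false by simp [h])⟩,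
    fun h => rightHom_congr f _ (Function.update_of_ne h _ σ).symm⟩

theorem isRightFlip_midTup {k' : ℕ} (pr : ι → Fin k') {σ' : Fin k' → Bool} (hc : σ c = true)
    (hσ' : ∀ i, pl i = c → σ' (pr i) = s i) (h h') :
    IsRightFlip s pl c f (midTup f s pl pr σ σ' h)
      (midTup f s pl pr (Function.update σ c false) σ' h') := by
  intro i
  dsimp only [midTup]
  refine ⟨fun hi => ⟨pairObj_cond_of_eq P Q (hσ' i hi),
    midHom_heq_of_true_self f _ (by rw [hi, hc]) (hσ' i hi),
    midHom_heq_of_false_self f _ (by simp [hi]) (hσ' i hi)⟩,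
    fun hi => midHom_congr f _ _ (Function.update_of_ne hi _ σ).symm rfl⟩

theorem isLeftFlip_midTup {k' : ℕ} (pr : ι → Fin k') {σ' : Fin k' → Bool} (hc : σ c = true)
    (hσ' : ∀ i, pl i = c → σ' (pr i) = !s i) (h h') :
    IsLeftFlip s pl c f (midTup f s pr pl σ' σ h)
      (midTup f s pr pl σ' (Function.update σ c false) h') := by
  intro i
  dsimp only [midTup]
  refine ⟨fun hi => ⟨pairObj_cond_of_eq_not P Q (hσ' i hi),
    midHom_heq_of_not_true f _ (hσ' i hi) (by rw [hi, hc]),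
    midHom_heq_of_not_false f _ (hσ' i hi) (by simp [hi])⟩,
    fun hi => midHom_congr f _ _ rfl (Function.update_of_ne hi _ σ).symm⟩

end Tuples

section Composite

variable {m n p gΦ gΨ : ℕ} {sx : Fin m → Bool} {sy : Fin n → Bool} {sz : Fin p → Bool}
  (Φ : GGraph m n gΦ sx sy) (Ψ : GGraph n p gΨ sy sz)

def PrecAt (j : Fin n) (u v : Fin Φ.k ⊕ Fin Ψ.k) : Prop :=
  (sy j = true ∧ u = .inl (Φ.πR j) ∧ v = .inr (Ψ.πL j)) ∨
    (sy j = false ∧ u = .inr (Ψ.πL j) ∧ v = .inl (Φ.πR j))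

def Prec (u v : Fin Φ.k ⊕ Fin Ψ.k) : Prop := ∃ j, PrecAt Φ Ψ j u v

def Admissible (σΦ : Fin Φ.k → Bool) (σΨ : Fin Ψ.k → Bool) : Prop :=
  ∀ u v, Prec Φ Ψ u v → Sum.elim σΦ σΨ u ≤ Sum.elim σΦ σΨ v

variable {Φ Ψ}

theorem PrecAt.isLeft_ne {j : Fin n} {u v : Fin Φ.k ⊕ Fin Ψ.k} (h : PrecAt Φ Ψ j u v) :
    u.isLeft ≠ v.isLeft := by
  rcases h with ⟨-, rfl, rfl⟩ | ⟨-, rfl, rfl⟩ <;> simp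

theorem PrecAt.amEdge {j j' : Fin n} {u v w : Fin Φ.k ⊕ Fin Ψ.k} (h : PrecAt Φ Ψ j u v)
    (h' : PrecAt Φ Ψ j' v w) :
    amEdge Φ Ψ v.isLeft (.inl (.inr (.inl j))) (.inl (.inr (.inl j'))) := by
  rcases h with ⟨hs, -, rfl⟩ | ⟨hs, -, rfl⟩ <;> rcases h' with ⟨hs', hv, -⟩ | ⟨hs', hv, -⟩ <;>
    simp only [reduceCtorEq, Sum.inl.injEq, Sum.inr.injEq] at hv
  · exact ⟨.inl (.inl j), .inl (.inl j'),
      (Ψ.condX j j').2 ⟨by rw [hs, hs']; rfl, (Ψ.π_eq _ _).1 hv⟩, rfl, rfl⟩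
  · exact ⟨.inl (.inr j), .inl (.inr j'),
      (Φ.condY j j').2 ⟨by rw [hs, hs']; rfl, (Φ.π_eq _ _).1 hv⟩, rfl, rfl⟩

theorem not_transGen_prec (hL : ¬ HasAltLoop Φ Ψ) (u : Fin Φ.k ⊕ Fin Ψ.k) :
    ¬ Relation.TransGen (Prec Φ Ψ) u u := by
  intro hu
  obtain ⟨k, hk, us, hper, hus⟩ := hu.exists_periodic_chain
  choose J hJ using hus
  refine hL ⟨k, fun t => .inl (.inr (.inl (J (t % k)))), fun t => (us (t + 1)).isLeft, hk,
    by simp, fun t ht => ?_, fun t _ => (hJ (t + 1)).isLeft_ne⟩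
  have hnext := hJ ((t + 1) % k)
  rw [hper.map_mod_nat] at hnext
  simpa only [Nat.mod_eq_of_lt ht] using (hJ t).amEdge hnext

theorem admissible_const (b : Bool) : Admissible Φ Ψ (fun _ => b) (fun _ => b) := by
  rintro (_ | _) (_ | _) - <;> exact le_rfl

variable {σΦ : Fin Φ.k → Bool} {σΨ : Fin Ψ.k → Bool}

theorem Admissible.cond_le (h : Admissible Φ Ψ σΦ σΨ) (j : Fin n) :
    cond (sy j) (σΦ (Φ.πR j) ≤ σΨ (Ψ.πL j)) (σΨ (Ψ.πL j) ≤ σΦ (Φ.πR j)) := by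
  cases hs : sy j
  · exact h _ _ ⟨j, .inr ⟨hs, rfl, rfl⟩⟩
  · exact h _ _ ⟨j, .inl ⟨hs, rfl, rfl⟩⟩

theorem Admissible.eq_sign_of_update {c : Fin Φ.k} (hc : σΦ c = true)
    (h : Admissible Φ Ψ σΦ σΨ) (h' : Admissible Φ Ψ (Function.update σΦ c false) σΨ)
    {j : Fin n} (hj : Φ.πR j = c) : σΨ (Ψ.πL j) = sy j := by
  cases hs : sy j
  · have hle := h' _ _ ⟨j, .inr ⟨hs, rfl, by rw [hj]⟩⟩
    rw [Sum.elim_inr, Sum.elim_inl, Function.update_self] at hle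
    exact le_antisymm hle (Bool.false_le _)
  · have hle := h _ _ ⟨j, .inl ⟨hs, by rw [hj], rfl⟩⟩
    rw [Sum.elim_inl, Sum.elim_inr, hc] at hle
    exact le_antisymm (Bool.le_true _) hle

theorem Admissible.eq_not_sign_of_update {d : Fin Ψ.k} (hd : σΨ d = true)
    (h : Admissible Φ Ψ σΦ σΨ) (h' : Admissible Φ Ψ σΦ (Function.update σΨ d false))
    {j : Fin n} (hj : Ψ.πL j = d) : σΦ (Φ.πR j) = !sy j := by
  cases hs : sy j
  · have hle := h _ _ ⟨j, .inr ⟨hs, by rw [hj], rfl⟩⟩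
    rw [Sum.elim_inr, Sum.elim_inl, hd] at hle
    exact le_antisymm (Bool.le_true _) hle
  · have hle := h' _ _ ⟨j, .inl ⟨hs, rfl, by rw [hj]⟩⟩
    rw [Sum.elim_inl, Sum.elim_inr, Function.update_self] at hle
    exact le_antisymm hle (Bool.false_le _)

end Composite

section Theta

variable {m n p gΦ gΨ : ℕ} {sx : Fin m → Bool} {sy : Fin n → Bool} {sz : Fin p → Bool}
  {Φ : GGraph m n gΦ sx sy} {Ψ : GGraph n p gΨ sy sz} {P Q : B} (f : P ⟶ Q)
  (F : (∀ i : Fin m, VarCat B (sx i)) ⥤ B) (G : (∀ j : Fin n, VarCat B (sy j)) ⥤ B)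
  (H : (∀ l : Fin p, VarCat B (sz l)) ⥤ B)
  (γ : ∀ A : Fin Φ.k → B, F.obj (diagObj sx Φ.πL A) ⟶ G.obj (diagObj sy Φ.πR A))
  (δ : ∀ A : Fin Ψ.k → B, G.obj (diagObj sy Ψ.πL A) ⟶ H.obj (diagObj sz Ψ.πR A))

def theta (σΦ : Fin Φ.k → Bool) (σΨ : Fin Ψ.k → Bool) (h : Admissible Φ Ψ σΦ σΨ) :
    F.obj (tupObj sx P Q) ⟶ H.obj (tupObj sz Q P) :=
  F.map (leftTup f sx Φ.πL σΦ) ≫ γ _ ≫ G.map (midTup f sy Φ.πR Ψ.πL σΦ σΨ h.cond_le) ≫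
    δ _ ≫ H.map (rightTup f sz Ψ.πR σΨ)

theorem theta_congr {σΦ σΦ' : Fin Φ.k → Bool} {σΨ σΨ' : Fin Ψ.k → Bool} (hΦ : σΦ = σΦ')
    (hΨ : σΨ = σΨ') (h : Admissible Φ Ψ σΦ σΨ) (h' : Admissible Φ Ψ σΦ' σΨ') :
    theta f F G H γ δ σΦ σΨ h = theta f F G H γ δ σΦ' σΨ' h' := by
  subst hΦ hΨ
  rfl

theorem theta_const (b : Bool) :
    theta f F G H γ δ (fun _ => b) (fun _ => b) (admissible_const b) =
      F.map (leftTup f sx Φ.πL fun _ => b) ≫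
        (γ (fun _ => cond b Q P) ≫ δ (fun _ => cond b Q P)) ≫
        H.map (rightTup f sz Ψ.πR fun _ => b) := by
  have hmid : midTup f sy Φ.πR Ψ.πL (fun _ => b) (fun _ => b)
      (admissible_const (Φ := Φ) (Ψ := Ψ) b).cond_le = 𝟙 _ :=
    funext fun j => midHom_self f _ _ _
  rw [theta, hmid, G.map_id, Category.id_comp, Category.assoc]

variable {σΦ : Fin Φ.k → Bool} {σΨ : Fin Ψ.k → Bool}

theorem theta_update_left (hγ : IsGDin Φ F G γ) {c : Fin Φ.k} (hc : σΦ c = true)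
    (h : Admissible Φ Ψ σΦ σΨ) (h' : Admissible Φ Ψ (Function.update σΦ c false) σΨ) :
    theta f F G H γ δ σΦ σΨ h = theta f F G H γ δ (Function.update σΦ c false) σΨ h' := by
  have key := hγ.flip f c (updF_cond_of_true σΦ hc P Q) (updF_cond σΦ c P Q)
    (isLeftFlip_leftTup f sx Φ.πL hc) (isRightFlip_midTup f sy Φ.πR Ψ.πL hc
      (fun _ => h.eq_sign_of_update hc h') h.cond_le h'.cond_le)
  rw [theta, theta, reassoc_of% key]

theorem theta_update_right (hδ : IsGDin Ψ G H δ) {d : Fin Ψ.k} (hd : σΨ d = true)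
    (h : Admissible Φ Ψ σΦ σΨ) (h' : Admissible Φ Ψ σΦ (Function.update σΨ d false)) :
    theta f F G H γ δ σΦ σΨ h = theta f F G H γ δ σΦ (Function.update σΨ d false) h' := by
  rw [theta, theta, hδ.flip f d (updF_cond_of_true σΨ hd P Q) (updF_cond σΨ d P Q)
    (isLeftFlip_midTup f sy Ψ.πL Φ.πR hd (fun _ => h.eq_not_sign_of_update hd h')
      h.cond_le h'.cond_le) (isRightFlip_rightTup f sz Ψ.πR hd)]

theorem theta_eq_theta_false (hγ : IsGDin Φ F G γ) (hδ : IsGDin Ψ G H δ)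
    (hL : ¬ HasAltLoop Φ Ψ) (h : Admissible Φ Ψ σΦ σΨ) :
    theta f F G H γ δ σΦ σΨ h =
      theta f F G H γ δ (fun _ => false) (fun _ => false) (admissible_const false) := by
  classical
  refine eq_at_false_of_update_invariant (not_transGen_prec hL)
    (fun σ hσ => theta f F G H γ δ (σ ∘ Sum.inl) (σ ∘ Sum.inr)
      (by rwa [Admissible, Sum.elim_comp_inl_inr])) ?_ (Sum.elim σΦ σΨ) h
  rintro σ hσ (c | d) hσ' hu
  · rw [theta_congr f F G H γ δ Sum.update_inl_comp_inl Sum.update_inl_comp_inr]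
    · exact theta_update_left f F G H γ δ hγ hu _ _
    · rwa [Admissible, ← Sum.update_elim_inl, Sum.elim_comp_inl_inr]
  · rw [theta_congr f F G H γ δ Sum.update_inr_comp_inl Sum.update_inr_comp_inr]
    · exact theta_update_right f F G H γ δ hδ hu _ _
    · rwa [Admissible, ← Sum.update_elim_inr, Sum.elim_comp_inl_inr]

end Theta

theorem no_altLoop_provides_general
    {m n p gΦ gΨ : ℕ} {sx : Fin m → Bool} {sy : Fin n → Bool} {sz : Fin p → Bool}
    (Φ : GGraph m n gΦ sx sy) (Ψ : GGraph n p gΨ sy sz)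
    (hL : ¬ HasAltLoop Φ Ψ) :
    Provides.{u, v} Φ Ψ := by
  intro B _ F G H γ δ hγ hδ P Q f
  have key := theta_eq_theta_false f F G H γ δ hγ hδ hL (admissible_const true)
  rwa [theta_const, theta_const] at key

/-- Lemma 2.10 of the paper.  If there are no alternating loops
in the single-component amalgamation `Φ+Ψ`, then `Φ+Ψ` provides g-dinaturality
(i.e. `P(Φ,Ψ)` holds). -/
theorem no_altLoop_provides
    {m n p gΦ gΨ : ℕ} {sx : Fin m → Bool} {sy : Fin n → Bool} {sz : Fin p → Bool}
    (Φ : GGraph m n gΦ sx sy) (Ψ : GGraph n p gΨ sy sz)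
    (hconn : AmalgConnected Φ Ψ) (hL : ¬ HasAltLoop Φ Ψ) :
    Provides.{u, v} Φ Ψ :=
  no_altLoop_provides_general Φ Ψ hL

end GDin
end
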